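/- arXiv:2409.01948 — 8 statements merged into one kernel-verified Lean document; each statement's English description precedes it below -/
import Mathlib

section
/- Every maximal set of pairwise orthogonal positive roots in the root system D_n (n even, n = 2k ≥ 4) has the form {ε_{i_1} + ε_{j_1}, ε_{i_1} − ε_{j_1}, ..., ε_{i_k} + ε_{j_k}, ε_{i_k} − ε_{j_k}} where {{i_1,j_1},...,{i_k,j_k}} is a perfect matching of {1,...,n} with i_r < j_r for all r; consequently such maximal sets are in bijection with perfect matchings of {1,...,n}. -/
/-!
If `ε_i + ε_j ∈ R` but `ε_i - ε_j ∉ R`, maximality gives `α ∈ R` with `α_i ≠ α_j`, while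
`α ⊥ ε_i + ε_j` forces `α_i = -α_j`; then `α` is supported on `{i, j}`, so `α = ε_i ± ε_j`,
which is absurd. Hence `R` is determined by the pairs `{i, j}` with `ε_i + ε_j ∈ R`. Two such
pairs sharing one index would give non-orthogonal roots, so they form a partial matching, i.e.
an involution. Since `n` is even, an involution with one fixed point has a second one, and two
unmatched indices `i, j` would make `ε_i + ε_j` orthogonal to all of `R`.
-/

open Function Matrix

theorem Function.Involutive.exists_isFixedPt_ne {α : Type*} [Fintype α] {f : α → α}
    (hf : Involutive f) (hα : Even (Fintype.card α)) {a : α} (ha : IsFixedPt f a) :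
    ∃ b, IsFixedPt f b ∧ b ≠ a :=
  haveI : Fact (Nat.Prime 2) := ⟨Nat.prime_two⟩
  Equiv.Perm.exists_fixed_point_of_prime' (p := 2) (n := 1) (even_iff_two_dvd.mp hα)
    (σ := hf.toPerm f) (Equiv.ext fun x => hf x) ha

namespace DRoots

variable {n : ℕ}

def plusRoot (i j : Fin n) : Fin n → ℝ := Pi.single i 1 + Pi.single j 1

def minusRoot (i j : Fin n) : Fin n → ℝ := Pi.single i 1 - Pi.single j 1

def posRoots (n : ℕ) : Set (Fin n → ℝ) :=
  {v | ∃ i j, i < j ∧ (v = plusRoot i j ∨ v = minusRoot i j)}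

def matchingRoots (f : Fin n → Fin n) : Set (Fin n → ℝ) :=
  {v | ∃ i j, i < j ∧ f i = j ∧ (v = plusRoot i j ∨ v = minusRoot i j)}

structure IsMaximalOrthogonal (R : Set (Fin n → ℝ)) : Prop where
  subset_posRoots : R ⊆ posRoots n
  orthogonal : ∀ α ∈ R, ∀ β ∈ R, α ≠ β → α ⬝ᵥ β = 0
  maximal : ∀ γ ∈ posRoots n, γ ∉ R → ∃ α ∈ R, α ⬝ᵥ γ ≠ 0

lemma plusRoot_comm (i j : Fin n) : plusRoot i j = plusRoot j i := add_comm _ _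

lemma dotProduct_plusRoot (v : Fin n → ℝ) (i j : Fin n) : v ⬝ᵥ plusRoot i j = v i + v j := by
  simp only [plusRoot, dotProduct_add, dotProduct_single_one]

lemma dotProduct_minusRoot (v : Fin n → ℝ) (i j : Fin n) : v ⬝ᵥ minusRoot i j = v i - v j := by
  simp only [minusRoot, dotProduct_sub, dotProduct_single_one]

lemma plusRoot_mem_posRoots {i j : Fin n} (hij : i ≠ j) : plusRoot i j ∈ posRoots n := by
  rcases hij.lt_or_gt with h | h
  · exact ⟨i, j, h, Or.inl rfl⟩
  · exact ⟨j, i, h, Or.inl (plusRoot_comm i j)⟩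

lemma minusRoot_mem_posRoots {i j : Fin n} (hij : i < j) : minusRoot i j ∈ posRoots n :=
  ⟨i, j, hij, Or.inr rfl⟩

lemma eq_or_eq_of_apply_ne_zero {a b m : Fin n} {v : Fin n → ℝ}
    (hv : v = plusRoot a b ∨ v = minusRoot a b) (hm : v m ≠ 0) : m = a ∨ m = b := by
  contrapose! hm
  rcases hv with rfl | rfl <;> simp [plusRoot, minusRoot, hm.1, hm.2]

lemma eq_plusRoot_or_eq_minusRoot {v : Fin n → ℝ} (hv : v ∈ posRoots n) {i j : Fin n}
    (hij : i < j) (hi : v i ≠ 0) (hj : v j ≠ 0) : v = plusRoot i j ∨ v = minusRoot i j := by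
  obtain ⟨a, b, hab, hvab⟩ := hv
  rcases eq_or_eq_of_apply_ne_zero hvab hi with rfl | rfl <;>
    rcases eq_or_eq_of_apply_ne_zero hvab hj with rfl | rfl
  all_goals first | exact hvab | exact absurd hij (by order)

lemma eq_plusRoot_or_eq_minusRoot_of_xor {v : Fin n → ℝ} (hv : v ∈ posRoots n) {i j : Fin n}
    (hij : i < j) (h : Xor (v ⬝ᵥ plusRoot i j = 0) (v ⬝ᵥ minusRoot i j = 0)) :
    v = plusRoot i j ∨ v = minusRoot i j := by
  rw [dotProduct_plusRoot, dotProduct_minusRoot] at h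
  refine eq_plusRoot_or_eq_minusRoot hv hij ?_ ?_ <;> intro h0 <;>
    rcases h with ⟨h1, h2⟩ | ⟨h1, h2⟩ <;> exact h2 (by linarith)

noncomputable def partner (R : Set (Fin n → ℝ)) (i : Fin n) : Fin n :=
  open Classical in if h : ∃ j, i ≠ j ∧ plusRoot i j ∈ R then h.choose else i

namespace IsMaximalOrthogonal

variable {R : Set (Fin n → ℝ)} (hR : IsMaximalOrthogonal R)
include hR

theorem mem_of_forall_eq_or_eq {β γ : Fin n → ℝ} (hβ : β ∈ R) (hγ : γ ∈ posRoots n)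
    (hβγ : β ⬝ᵥ γ = 0)
    (h : ∀ α ∈ posRoots n, α ⬝ᵥ β = 0 → α ⬝ᵥ γ ≠ 0 → α = β ∨ α = γ) : γ ∈ R := by
  by_contra hγR
  obtain ⟨α, hα, hαγ⟩ := hR.maximal γ hγ hγR
  have hαβ : α ≠ β := by rintro rfl; exact hαγ hβγ
  rcases h α (hR.subset_posRoots hα) (hR.orthogonal α hα β hβ hαβ) hαγ with rfl | rfl
  exacts [hαβ rfl, hγR hα]

theorem plusRoot_mem_iff {i j : Fin n} (hij : i < j) :
    plusRoot i j ∈ R ↔ minusRoot i j ∈ R := by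
  have hdot : plusRoot i j ⬝ᵥ minusRoot i j = 0 := by
    rw [dotProduct_comm, dotProduct_plusRoot]
    simp [minusRoot, hij.ne, hij.ne']
  constructor <;> intro h
  · exact hR.mem_of_forall_eq_or_eq h (minusRoot_mem_posRoots hij) hdot fun α hα h₁ h₂ =>
      eq_plusRoot_or_eq_minusRoot_of_xor hα hij (Or.inl ⟨h₁, h₂⟩)
  · refine hR.mem_of_forall_eq_or_eq h (plusRoot_mem_posRoots hij.ne)
      (by rwa [dotProduct_comm]) fun α hα h₁ h₂ => ?_
    exact (eq_plusRoot_or_eq_minusRoot_of_xor hα hij (Or.inr ⟨h₁, h₂⟩)).symm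

theorem plusRoot_mem_of_mem {v : Fin n → ℝ} (hv : v ∈ R) {a b : Fin n} (hab : a < b)
    (hvab : v = plusRoot a b ∨ v = minusRoot a b) : plusRoot a b ∈ R := by
  rcases hvab with rfl | rfl
  exacts [hv, (hR.plusRoot_mem_iff hab).2 hv]

theorem eq_of_plusRoot_mem {i j j' : Fin n} (hij : i ≠ j) (hij' : i ≠ j')
    (hj : plusRoot i j ∈ R) (hj' : plusRoot i j' ∈ R) : j = j' := by
  by_contra hne
  have hdot : plusRoot i j ⬝ᵥ plusRoot i j' ≠ 0 := by
    simp [plusRoot, hij, hij', Ne.symm hne]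
  have h := congrFun (not_imp_comm.1 (hR.orthogonal _ hj _ hj') hdot) j
  simp [plusRoot, Ne.symm hij, hne] at h

theorem partner_eq {i j : Fin n} (hij : i ≠ j) (hj : plusRoot i j ∈ R) : partner R i = j := by
  have hex : ∃ j, i ≠ j ∧ plusRoot i j ∈ R := ⟨j, hij, hj⟩
  rw [partner, dif_pos hex]
  exact hR.eq_of_plusRoot_mem hex.choose_spec.1 hij hex.choose_spec.2 hj

theorem plusRoot_partner_mem {i : Fin n} (hi : partner R i ≠ i) :
    plusRoot i (partner R i) ∈ R := by
  by_cases hex : ∃ j, i ≠ j ∧ plusRoot i j ∈ R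
  · obtain ⟨j, hij, hj⟩ := hex
    rwa [hR.partner_eq hij hj]
  · exact absurd (dif_neg hex) hi

theorem partner_involutive : Involutive (partner R) := by
  intro i
  by_cases hi : partner R i = i
  · rw [hi, hi]
  · exact hR.partner_eq hi (plusRoot_comm i _ ▸ hR.plusRoot_partner_mem hi)

theorem partner_ne_self_of_apply_ne_zero {α : Fin n → ℝ} (hα : α ∈ R) {i : Fin n}
    (hi : α i ≠ 0) : partner R i ≠ i := by
  obtain ⟨a, b, hab, hαab⟩ := hR.subset_posRoots hα
  have hmem := hR.plusRoot_mem_of_mem hα hab hαab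
  rcases eq_or_eq_of_apply_ne_zero hαab hi with rfl | rfl
  · rw [hR.partner_eq hab.ne hmem]
    exact hab.ne'
  · rw [hR.partner_eq hab.ne' (plusRoot_comm _ _ ▸ hmem)]
    exact hab.ne

theorem partner_ne_self (hn : Even n) (i : Fin n) : partner R i ≠ i := by
  intro hi
  obtain ⟨j, hj, hji⟩ :=
    hR.partner_involutive.exists_isFixedPt_ne (by rwa [Fintype.card_fin]) hi
  have hnot : plusRoot i j ∉ R := fun h => hji (hi ▸ hR.partner_eq (Ne.symm hji) h).symm
  obtain ⟨α, hα, hdot⟩ := hR.maximal _ (plusRoot_mem_posRoots (Ne.symm hji)) hnot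
  rw [dotProduct_plusRoot] at hdot
  by_cases hαi : α i = 0
  · exact hR.partner_ne_self_of_apply_ne_zero hα (i := j) (by simpa [hαi] using hdot) hj
  · exact hR.partner_ne_self_of_apply_ne_zero hα hαi hi

theorem eq_matchingRoots : R = matchingRoots (partner R) := by
  ext v
  constructor
  · intro hv
    obtain ⟨a, b, hab, hvab⟩ := hR.subset_posRoots hv
    exact ⟨a, b, hab, hR.partner_eq hab.ne (hR.plusRoot_mem_of_mem hv hab hvab), hvab⟩
  · rintro ⟨i, j, hij, rfl, hv | hv⟩ <;> rw [hv]
    · exact hR.plusRoot_partner_mem hij.ne'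
    · exact (hR.plusRoot_mem_iff hij).1 (hR.plusRoot_partner_mem hij.ne')

end IsMaximalOrthogonal

lemma plusRoot_mem_matchingRoots {f : Fin n → Fin n} (hf : Involutive f) {i : Fin n}
    (hi : f i ≠ i) : plusRoot i (f i) ∈ matchingRoots f := by
  rcases hi.lt_or_gt with h | h
  · exact ⟨f i, i, h, hf i, Or.inl (plusRoot_comm _ _)⟩
  · exact ⟨i, f i, h, rfl, Or.inl rfl⟩

theorem IsMaximalOrthogonal.existsUnique_matching {R : Set (Fin n → ℝ)}
    (hR : IsMaximalOrthogonal R) (hn : Even n) :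
    ∃! f : Fin n → Fin n, Involutive f ∧ (∀ i, f i ≠ i) ∧ R = matchingRoots f :=
  ⟨partner R, ⟨hR.partner_involutive, hR.partner_ne_self hn, hR.eq_matchingRoots⟩,
    fun _ ⟨hf, hfix, hRf⟩ => funext fun i =>
      (hR.partner_eq (hfix i).symm (hRf ▸ plusRoot_mem_matchingRoots hf (hfix i))).symm⟩

end DRoots

theorem stmt1_general (k : ℕ) (n : ℕ) (hn : n = 2 * k)
    (Pos : Set (Fin n → ℝ))
    (hPos : Pos = {v | ∃ i j : Fin n, i < j ∧
      (v = (Pi.single i 1 : Fin n → ℝ) + (Pi.single j 1 : Fin n → ℝ) ∨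
       v = (Pi.single i 1 : Fin n → ℝ) - (Pi.single j 1 : Fin n → ℝ))})
    (R : Set (Fin n → ℝ))
    (hsub : R ⊆ Pos)
    (horth : ∀ α ∈ R, ∀ β ∈ R, α ≠ β → (∑ m, α m * β m) = 0)
    (hmax : ∀ γ ∈ Pos, γ ∉ R → ∃ α ∈ R, (∑ m, α m * γ m) ≠ 0) :
    ∃! f : Fin n → Fin n, Function.Involutive f ∧ (∀ i, f i ≠ i) ∧
      R = {v | ∃ i j : Fin n, i < j ∧ f i = j ∧
        (v = (Pi.single i 1 : Fin n → ℝ) + (Pi.single j 1 : Fin n → ℝ) ∨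
         v = (Pi.single i 1 : Fin n → ℝ) - (Pi.single j 1 : Fin n → ℝ))} := by
  subst hPos
  exact DRoots.IsMaximalOrthogonal.existsUnique_matching ⟨hsub, horth, hmax⟩ ⟨k, by omega⟩

/-- Every maximal set of pairwise orthogonal positive roots of `D_n` (`n = 2k ≥ 4`)
comes from a unique perfect matching of `{1,…,n}`: it consists of the roots
`ε_i + ε_j, ε_i − ε_j` for the blocks `{i,j}` (`i < j`) of the matching; hence such
maximal sets are in bijection with perfect matchings (encoded as fixed-point-free
involutions). -/
theorem stmt1 (k : ℕ) (hk : 2 ≤ k) (n : ℕ) (hn : n = 2 * k)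
    (Pos : Set (Fin n → ℝ))
    (hPos : Pos = {v | ∃ i j : Fin n, i < j ∧
      (v = (Pi.single i 1 : Fin n → ℝ) + (Pi.single j 1 : Fin n → ℝ) ∨
       v = (Pi.single i 1 : Fin n → ℝ) - (Pi.single j 1 : Fin n → ℝ))})
    (R : Set (Fin n → ℝ))
    (hsub : R ⊆ Pos)
    (horth : ∀ α ∈ R, ∀ β ∈ R, α ≠ β → (∑ m, α m * β m) = 0)
    (hmax : ∀ γ ∈ Pos, γ ∉ R → ∃ α ∈ R, (∑ m, α m * γ m) ≠ 0) :
    ∃! f : Fin n → Fin n, Function.Involutive f ∧ (∀ i, f i ≠ i) ∧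
      R = {v | ∃ i j : Fin n, i < j ∧ f i = j ∧
        (v = (Pi.single i 1 : Fin n → ℝ) + (Pi.single j 1 : Fin n → ℝ) ∨
         v = (Pi.single i 1 : Fin n → ℝ) - (Pi.single j 1 : Fin n → ℝ))} :=
  stmt1_general k n hn Pos hPos R hsub horth hmax
end

section
/- Let β_1, β_2, β_3, β_4 be four mutually orthogonal roots in a simply laced root system Φ with every root of squared length 2, and suppose γ = (β_1 + β_2 + β_3 + β_4)/2 lies in Φ. Then the set Ψ = {±β_1, ±β_2, ±β_3, ±β_4} ∪ {(±β_1 ± β_2 ± β_3 ± β_4)/2 : all sign choices} is contained in Φ and is a root system of type D_4 (i.e., it is isometric to {±e_i ± e_j : 1 ≤ i < j ≤ 4}). -/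
/-!
Reflecting the half-sum `γ = ½ ∑ βᵢ` in any `βᵢ` subtracts `βᵢ`, because `⟪βᵢ, γ⟫ = 1`; the result
still pairs to `1` with the remaining `βⱼ`, so subtracting any subset of the `βᵢ` from `γ` stays in
`Φ`. This produces every `½ ∑ ±βᵢ`, and `-βᵢ = s_{βᵢ} βᵢ`, so `Ψ ⊆ Φ`. Since the `βᵢ` are orthogonal
of squared length `2`, sending them to the orthogonal frame `e₀ ± e₁, e₂ ± e₃` of `ℝ⁴` preserves
inner products on their span, and a finite check identifies the image of `Ψ` with `±eᵢ ± eⱼ`.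
-/

open scoped RealInnerProductSpace
open Finset

section ReflectionClosed

variable {V : Type*} [NormedAddCommGroup V] [InnerProductSpace ℝ V] {Φ : Set V}

theorem neg_mem_of_reflection_mem (hlen : ∀ α ∈ Φ, ⟪α, α⟫ = (2 : ℝ))
    (hrefl : ∀ α ∈ Φ, ∀ β ∈ Φ, β - ⟪α, β⟫ • α ∈ Φ) {α : V} (hα : α ∈ Φ) : -α ∈ Φ := by
  have h := hrefl α hα α hα
  rwa [hlen α hα, two_smul, sub_add_cancel_left] at h

theorem sub_sum_mem_of_reflection_mem (hrefl : ∀ α ∈ Φ, ∀ β ∈ Φ, β - ⟪α, β⟫ • α ∈ Φ)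
    {ι : Type*} {β : ι → V} (hβ : ∀ i, β i ∈ Φ) (horth : Pairwise fun i j => ⟪β i, β j⟫ = (0 : ℝ))
    {x : V} (hx : x ∈ Φ) (s : Finset ι) (hxβ : ∀ i ∈ s, ⟪β i, x⟫ = (1 : ℝ)) :
    x - ∑ i ∈ s, β i ∈ Φ := by
  classical
  induction s using Finset.induction_on with
  | empty => simpa using hx
  | @insert a s ha ih =>
    have hone : ⟪β a, x - ∑ i ∈ s, β i⟫ = (1 : ℝ) := by
      rw [inner_sub_right, inner_sum, hxβ a (mem_insert_self a s),
        sum_eq_zero fun i hi => horth (ne_of_mem_of_not_mem hi ha).symm, sub_zero]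
    have h := hrefl _ (hβ a) _ (ih fun i hi => hxβ i (mem_insert_of_mem hi))
    rwa [hone, one_smul, sub_sub, add_comm, ← sum_insert ha] at h

theorem half_smul_sum_signs {ι M : Type*} [Fintype ι] [AddCommGroup M] [Module ℝ M]
    (β : ι → M) {e : ι → ℝ} (he : ∀ i, e i = 1 ∨ e i = -1) :
    (2 : ℝ)⁻¹ • ∑ i, e i • β i = (2 : ℝ)⁻¹ • ∑ i, β i - ∑ i with e i = -1, β i := by
  rw [sum_filter, smul_sum, smul_sum, ← sum_sub_distrib]
  refine sum_congr rfl fun i _ => ?_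
  rcases he i with h | h
  · norm_num [h]
  · norm_num [h]; module

theorem half_smul_sum_signs_mem (hlen : ∀ α ∈ Φ, ⟪α, α⟫ = (2 : ℝ))
    (hrefl : ∀ α ∈ Φ, ∀ β ∈ Φ, β - ⟪α, β⟫ • α ∈ Φ)
    {ι : Type*} [Fintype ι] {β : ι → V} (hβ : ∀ i, β i ∈ Φ)
    (horth : Pairwise fun i j => ⟪β i, β j⟫ = (0 : ℝ))
    (hγ : (2 : ℝ)⁻¹ • ∑ i, β i ∈ Φ) {e : ι → ℝ} (he : ∀ i, e i = 1 ∨ e i = -1) :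
    (2 : ℝ)⁻¹ • ∑ i, e i • β i ∈ Φ := by
  rw [half_smul_sum_signs β he]
  refine sub_sum_mem_of_reflection_mem hrefl hβ horth hγ _ fun i _ => ?_
  rw [real_inner_smul_right, inner_sum, sum_eq_single i (fun j _ hji => horth hji.symm)
    (by simp), hlen _ (hβ i)]
  norm_num

end ReflectionClosed

section OrthogonalFamily

variable {ι V W : Type*} [Fintype ι] [NormedAddCommGroup V] [InnerProductSpace ℝ V]
  [NormedAddCommGroup W] [InnerProductSpace ℝ W]

theorem inner_linearCombination_right {β : ι → V} (hnorm : ∀ i, ⟪β i, β i⟫ = (2 : ℝ))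
    (horth : Pairwise fun i j => ⟪β i, β j⟫ = (0 : ℝ)) (c : ι → ℝ) (j : ι) :
    ⟪β j, Fintype.linearCombination ℝ β c⟫ = 2 * c j := by
  rw [Fintype.linearCombination_apply, inner_sum,
    sum_eq_single j (fun i _ hij => by rw [real_inner_smul_right, horth hij.symm, mul_zero])
      (by simp), real_inner_smul_right, hnorm, mul_comm]

theorem inner_linearCombination_linearCombination {β : ι → V}
    (hnorm : ∀ i, ⟪β i, β i⟫ = (2 : ℝ)) (horth : Pairwise fun i j => ⟪β i, β j⟫ = (0 : ℝ))
    (c d : ι → ℝ) :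
    ⟪Fintype.linearCombination ℝ β c, Fintype.linearCombination ℝ β d⟫ = 2 * ∑ i, c i * d i := by
  rw [Fintype.linearCombination_apply ℝ β d, inner_sum, mul_sum]
  refine sum_congr rfl fun i _ => ?_
  rw [real_inner_smul_right, real_inner_comm, inner_linearCombination_right hnorm horth]
  ring

/-- On the span of `β` this sends `∑ cᵢ βᵢ` to `∑ cᵢ bᵢ`, since `⟪βⱼ, ∑ cᵢ βᵢ⟫ = 2 cⱼ`. -/
noncomputable def frameTransfer (β : ι → V) (b : ι → W) (v : V) : W :=
  Fintype.linearCombination ℝ b fun i => ⟪β i, v⟫ / 2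

theorem frameTransfer_linearCombination {β : ι → V} (hnorm : ∀ i, ⟪β i, β i⟫ = (2 : ℝ))
    (horth : Pairwise fun i j => ⟪β i, β j⟫ = (0 : ℝ)) (b : ι → W) (c : ι → ℝ) :
    frameTransfer β b (Fintype.linearCombination ℝ β c) = Fintype.linearCombination ℝ b c := by
  simp only [frameTransfer, inner_linearCombination_right hnorm horth]
  congr 1
  ext i
  ring

theorem inner_frameTransfer_linearCombination {β : ι → V} {b : ι → W}
    (hβnorm : ∀ i, ⟪β i, β i⟫ = (2 : ℝ)) (hβorth : Pairwise fun i j => ⟪β i, β j⟫ = (0 : ℝ))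
    (hbnorm : ∀ i, ⟪b i, b i⟫ = (2 : ℝ)) (hborth : Pairwise fun i j => ⟪b i, b j⟫ = (0 : ℝ))
    (c d : ι → ℝ) :
    ⟪frameTransfer β b (Fintype.linearCombination ℝ β c),
      frameTransfer β b (Fintype.linearCombination ℝ β d)⟫ =
      ⟪Fintype.linearCombination ℝ β c, Fintype.linearCombination ℝ β d⟫ := by
  rw [frameTransfer_linearCombination hβnorm hβorth, frameTransfer_linearCombination hβnorm hβorth,
    inner_linearCombination_linearCombination hbnorm hborth,
    inner_linearCombination_linearCombination hβnorm hβorth]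

end OrthogonalFamily

theorem Set.injOn_of_inner_eq {E F : Type*} [NormedAddCommGroup E] [InnerProductSpace ℝ E]
    [NormedAddCommGroup F] [InnerProductSpace ℝ F] {f : E → F} {s : Set E}
    (hf : ∀ x ∈ s, ∀ y ∈ s, ⟪f x, f y⟫ = ⟪x, y⟫) : s.InjOn f := by
  intro x hx y hy hxy
  have h : ⟪x - y, x - y⟫ = (0 : ℝ) := by
    rw [real_inner_sub_sub_self, ← hf x hx x hx, ← hf x hx y hy, ← hf y hy y hy, hxy]
    ring
  rwa [inner_self_eq_zero, sub_eq_zero] at h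

theorem smul_add_smul_eq_or_of_signs {M : Type*} [AddCommGroup M] [Module ℝ M] (x y : M)
    {s t : ℝ} (hs : s = 1 ∨ s = -1) (ht : t = 1 ∨ t = -1) :
    (2⁻¹ * s + 2⁻¹ * t) • x + (2⁻¹ * s - 2⁻¹ * t) • y = s • x ∨
      (2⁻¹ * s + 2⁻¹ * t) • x + (2⁻¹ * s - 2⁻¹ * t) • y = s • y := by
  rcases hs with rfl | rfl <;> rcases ht with rfl | rfl <;> norm_num

theorem eq_or_eq_neg_of_signs {s t : ℝ} (hs : s = 1 ∨ s = -1) (ht : t = 1 ∨ t = -1) :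
    t = s ∨ t = -s := by
  rcases hs with rfl | rfl <;> rcases ht with rfl | rfl <;> norm_num

theorem neg_eq_one_or_eq_neg_one {s : ℝ} (hs : s = 1 ∨ s = -1) : -s = 1 ∨ -s = -1 := by
  rcases hs with rfl | rfl <;> norm_num

section D4

local notation "𝐞" k:max => EuclideanSpace.single (k : Fin 4) (1 : ℝ)

def d4Roots : Set (EuclideanSpace ℝ (Fin 4)) :=
  {w | ∃ (i j : Fin 4) (s t : ℝ), i < j ∧ (s = 1 ∨ s = -1) ∧ (t = 1 ∨ t = -1) ∧
    w = s • 𝐞 i + t • 𝐞 j}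

/-- The coordinates of `Ψ` with respect to `β`. -/
def d4Coeffs : Set (Fin 4 → ℝ) :=
  {c | (∃ k, c = Pi.single k 1 ∨ c = -Pi.single k 1) ∨
    ∃ e : Fin 4 → ℝ, (∀ i, e i = 1 ∨ e i = -1) ∧ c = (2 : ℝ)⁻¹ • e}

theorem smul_single_mem_d4Coeffs (k : Fin 4) {s : ℝ} (hs : s = 1 ∨ s = -1) :
    s • Pi.single k 1 ∈ d4Coeffs := by
  rcases hs with rfl | rfl
  · exact Or.inl ⟨k, Or.inl (one_smul _ _)⟩
  · exact Or.inl ⟨k, Or.inr (neg_one_smul _ _)⟩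

theorem image_linearCombination_d4Coeffs {M : Type*} [AddCommGroup M] [Module ℝ M]
    (β : Fin 4 → M) :
    Fintype.linearCombination ℝ β '' d4Coeffs = {v | (∃ i, v = β i ∨ v = -β i) ∨
      ∃ e : Fin 4 → ℝ, (∀ i, e i = 1 ∨ e i = -1) ∧ v = (2 : ℝ)⁻¹ • (∑ i, e i • β i)} := by
  ext v
  constructor
  · rintro ⟨c, (⟨k, rfl | rfl⟩ | ⟨e, he, rfl⟩), rfl⟩
    · exact Or.inl ⟨k, Or.inl (by simp)⟩
    · exact Or.inl ⟨k, Or.inr (by simp)⟩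
    · exact Or.inr ⟨e, he, by rw [map_smul, Fintype.linearCombination_apply]⟩
  · rintro (⟨k, rfl | rfl⟩ | ⟨e, he, rfl⟩)
    · exact ⟨_, Or.inl ⟨k, Or.inl rfl⟩, by simp⟩
    · exact ⟨_, Or.inl ⟨k, Or.inr rfl⟩, by simp⟩
    · exact ⟨_, Or.inr ⟨e, he, rfl⟩, by rw [map_smul, Fintype.linearCombination_apply]⟩

noncomputable def d4Frame : Fin 4 → EuclideanSpace ℝ (Fin 4) :=
  ![𝐞 0 + 𝐞 1, 𝐞 0 - 𝐞 1, 𝐞 2 + 𝐞 3, 𝐞 2 - 𝐞 3]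

theorem inner_d4Frame_self (i : Fin 4) : ⟪d4Frame i, d4Frame i⟫ = (2 : ℝ) := by
  fin_cases i <;> rw [PiLp.inner_apply] <;> simp [d4Frame, Fin.sum_univ_four] <;> norm_num

theorem inner_d4Frame_of_ne : Pairwise fun i j => ⟪d4Frame i, d4Frame j⟫ = (0 : ℝ) := by
  intro i j hij
  fin_cases i <;> fin_cases j <;> simp_all [d4Frame, PiLp.inner_apply, Fin.sum_univ_four]

theorem linearCombination_d4Frame (c : Fin 4 → ℝ) :
    Fintype.linearCombination ℝ d4Frame c =
      ((c 0 + c 1) • 𝐞 0 + (c 0 - c 1) • 𝐞 1) + ((c 2 + c 3) • 𝐞 2 + (c 2 - c 3) • 𝐞 3) := by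
  rw [Fintype.linearCombination_apply, Fin.sum_univ_four]
  simp only [d4Frame, Matrix.cons_val]
  module

theorem smul_d4Frame_mem_d4Roots (k : Fin 4) {s : ℝ} (hs : s = 1 ∨ s = -1) :
    s • d4Frame k ∈ d4Roots := by
  have hs' := neg_eq_one_or_eq_neg_one hs
  fin_cases k
  · exact ⟨0, 1, s, s, by decide, hs, hs, by simp [d4Frame, smul_add]⟩
  · exact ⟨0, 1, s, -s, by decide, hs, hs', by simp [d4Frame, sub_eq_add_neg]⟩
  · exact ⟨2, 3, s, s, by decide, hs, hs, by simp [d4Frame, smul_add]⟩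
  · exact ⟨2, 3, s, -s, by decide, hs, hs', by simp [d4Frame, sub_eq_add_neg]⟩

theorem linearCombination_d4Frame_mem_d4Roots {c : Fin 4 → ℝ} (hc : c ∈ d4Coeffs) :
    Fintype.linearCombination ℝ d4Frame c ∈ d4Roots := by
  rcases hc with ⟨k, rfl | rfl⟩ | ⟨e, he, rfl⟩
  · simpa using smul_d4Frame_mem_d4Roots k (Or.inl rfl)
  · simpa using smul_d4Frame_mem_d4Roots k (Or.inr rfl)
  · rw [linearCombination_d4Frame]
    simp only [Pi.smul_apply, smul_eq_mul]
    -- the `𝐞 0, 𝐞 1` half collapses to `e₀ • 𝐞 0` or `e₀ • 𝐞 1`, and likewise the `𝐞 2, 𝐞 3` half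
    rcases smul_add_smul_eq_or_of_signs (𝐞 0) (𝐞 1) (he 0) (he 1) with h01 | h01 <;>
      rcases smul_add_smul_eq_or_of_signs (𝐞 2) (𝐞 3) (he 2) (he 3) with h23 | h23 <;>
      rw [h01, h23] <;> exact ⟨_, _, _, _, by decide, he 0, he 2, rfl⟩

theorem forall_vec4_sign {a b c d : ℝ} (ha : a = 1 ∨ a = -1) (hb : b = 1 ∨ b = -1)
    (hc : c = 1 ∨ c = -1) (hd : d = 1 ∨ d = -1) :
    ∀ k, ![a, b, c, d] k = 1 ∨ ![a, b, c, d] k = -1 := by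
  intro k
  fin_cases k <;> assumption

theorem mem_image_d4Coeffs_of_mem_d4Roots {w : EuclideanSpace ℝ (Fin 4)} (hw : w ∈ d4Roots) :
    w ∈ Fintype.linearCombination ℝ d4Frame '' d4Coeffs := by
  obtain ⟨i, j, s, t, hij, hs, ht, rfl⟩ := hw
  have hs' := neg_eq_one_or_eq_neg_one hs
  have ht' := neg_eq_one_or_eq_neg_one ht
  fin_cases i <;> fin_cases j <;> simp only [Fin.reduceFinMk, Fin.reduceLT, Fin.isValue] at hij ⊢
  · rcases eq_or_eq_neg_of_signs hs ht with rfl | rfl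
    · exact ⟨_, smul_single_mem_d4Coeffs 0 hs, by simp [d4Frame, smul_add]⟩
    · exact ⟨_, smul_single_mem_d4Coeffs 1 hs, by simp [d4Frame, sub_eq_add_neg]⟩
  · refine ⟨_, Or.inr ⟨![s, s, t, t], forall_vec4_sign hs hs ht ht, rfl⟩, ?_⟩
    simp only [linearCombination_d4Frame, Pi.smul_apply, smul_eq_mul, Matrix.cons_val]
    module
  · refine ⟨_, Or.inr ⟨![s, s, t, -t], forall_vec4_sign hs hs ht ht', rfl⟩, ?_⟩
    simp only [linearCombination_d4Frame, Pi.smul_apply, smul_eq_mul, Matrix.cons_val]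
    module
  · refine ⟨_, Or.inr ⟨![s, -s, t, t], forall_vec4_sign hs hs' ht ht, rfl⟩, ?_⟩
    simp only [linearCombination_d4Frame, Pi.smul_apply, smul_eq_mul, Matrix.cons_val]
    module
  · refine ⟨_, Or.inr ⟨![s, -s, t, -t], forall_vec4_sign hs hs' ht ht', rfl⟩, ?_⟩
    simp only [linearCombination_d4Frame, Pi.smul_apply, smul_eq_mul, Matrix.cons_val]
    module
  · rcases eq_or_eq_neg_of_signs hs ht with rfl | rfl
    · exact ⟨_, smul_single_mem_d4Coeffs 2 hs, by simp [d4Frame, smul_add]⟩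
    · exact ⟨_, smul_single_mem_d4Coeffs 3 hs, by simp [d4Frame, sub_eq_add_neg]⟩

theorem image_d4Coeffs : Fintype.linearCombination ℝ d4Frame '' d4Coeffs = d4Roots :=
  Set.Subset.antisymm (Set.image_subset_iff.2 fun _ => linearCombination_d4Frame_mem_d4Roots)
    fun _ => mem_image_d4Coeffs_of_mem_d4Roots

end D4

theorem stmt2_general {V : Type*} [NormedAddCommGroup V] [InnerProductSpace ℝ V]
    (Φ : Set V)
    (hlen : ∀ α ∈ Φ, ⟪α, α⟫ = (2 : ℝ))
    (hrefl : ∀ α ∈ Φ, ∀ β ∈ Φ, β - ⟪α, β⟫ • α ∈ Φ)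
    (β : Fin 4 → V) (hβ : ∀ i, β i ∈ Φ)
    (horth : ∀ i j, i ≠ j → ⟪β i, β j⟫ = (0 : ℝ))
    (hγ : (2 : ℝ)⁻¹ • (β 0 + β 1 + β 2 + β 3) ∈ Φ)
    (Ψ : Set V)
    (hΨ : Ψ = {v | (∃ i, v = β i ∨ v = -β i) ∨
      ∃ e : Fin 4 → ℝ, (∀ i, e i = 1 ∨ e i = -1) ∧ v = (2 : ℝ)⁻¹ • (∑ i, e i • β i)}) :
    Ψ ⊆ Φ ∧
    ∃ φ : V → EuclideanSpace ℝ (Fin 4),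
      Set.InjOn φ Ψ ∧
      (∀ x ∈ Ψ, ∀ y ∈ Ψ, ⟪φ x, φ y⟫ = ⟪x, y⟫) ∧
      φ '' Ψ = {w : EuclideanSpace ℝ (Fin 4) | ∃ (i j : Fin 4) (s t : ℝ),
        i < j ∧ (s = 1 ∨ s = -1) ∧ (t = 1 ∨ t = -1) ∧
        w = s • EuclideanSpace.single i (1 : ℝ) + t • EuclideanSpace.single j (1 : ℝ)} := by
  have hnorm : ∀ i, ⟪β i, β i⟫ = (2 : ℝ) := fun i => hlen _ (hβ i)
  have hsub : Ψ ⊆ Φ := by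
    rw [hΨ]
    rintro v (⟨i, rfl | rfl⟩ | ⟨e, he, rfl⟩)
    · exact hβ i
    · exact neg_mem_of_reflection_mem hlen hrefl (hβ i)
    · exact half_smul_sum_signs_mem hlen hrefl hβ horth (by rwa [Fin.sum_univ_four]) he
  rw [← image_linearCombination_d4Coeffs] at hΨ
  subst hΨ
  have hinner : ∀ x ∈ Fintype.linearCombination ℝ β '' d4Coeffs,
      ∀ y ∈ Fintype.linearCombination ℝ β '' d4Coeffs,
      ⟪frameTransfer β d4Frame x, frameTransfer β d4Frame y⟫ = ⟪x, y⟫ := by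
    rintro _ ⟨c, -, rfl⟩ _ ⟨d, -, rfl⟩
    exact inner_frameTransfer_linearCombination hnorm horth inner_d4Frame_self
      inner_d4Frame_of_ne c d
  refine ⟨hsub, frameTransfer β d4Frame, Set.injOn_of_inner_eq hinner, hinner, ?_⟩
  rw [← Set.image_comp]
  exact (Set.image_congr fun c _ => frameTransfer_linearCombination hnorm horth d4Frame c).trans
    image_d4Coeffs

/-- Four mutually orthogonal roots in a simply laced root system whose half-sum is a root
generate a `D_4` subsystem `Ψ = {±β_i} ∪ {(±β_1 ± β_2 ± β_3 ± β_4)/2}`, which is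
contained in `Φ` and isometric to `{±e_i ± e_j : 1 ≤ i < j ≤ 4}`. -/
theorem stmt2 {V : Type*} [NormedAddCommGroup V] [InnerProductSpace ℝ V]
    (Φ : Set V) (hfin : Φ.Finite)
    (hlen : ∀ α ∈ Φ, ⟪α, α⟫ = (2 : ℝ))
    (hrefl : ∀ α ∈ Φ, ∀ β ∈ Φ, β - ⟪α, β⟫ • α ∈ Φ)
    (β : Fin 4 → V) (hβ : ∀ i, β i ∈ Φ)
    (horth : ∀ i j, i ≠ j → ⟪β i, β j⟫ = (0 : ℝ))
    (hγ : (2 : ℝ)⁻¹ • (β 0 + β 1 + β 2 + β 3) ∈ Φ)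
    (Ψ : Set V)
    (hΨ : Ψ = {v | (∃ i, v = β i ∨ v = -β i) ∨
      ∃ e : Fin 4 → ℝ, (∀ i, e i = 1 ∨ e i = -1) ∧ v = (2 : ℝ)⁻¹ • (∑ i, e i • β i)}) :
    Ψ ⊆ Φ ∧
    ∃ φ : V → EuclideanSpace ℝ (Fin 4),
      Set.InjOn φ Ψ ∧
      (∀ x ∈ Ψ, ∀ y ∈ Ψ, ⟪φ x, φ y⟫ = ⟪x, y⟫) ∧
      φ '' Ψ = {w : EuclideanSpace ℝ (Fin 4) | ∃ (i j : Fin 4) (s t : ℝ),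
        i < j ∧ (s = 1 ∨ s = -1) ∧ (t = 1 ∨ t = -1) ∧
        w = s • EuclideanSpace.single i (1 : ℝ) + t • EuclideanSpace.single j (1 : ℝ)} :=
  stmt2_general Φ hlen hrefl β hβ horth hγ Ψ hΨ
end

section
/- In a root system of type D_4 with simple roots α_1, α_2, α_3, α_4 (α_2 the branch node), the 12 positive roots are partitioned into exactly three quadruples of mutually orthogonal roots: {α_1+α_2, α_2+α_3, α_2+α_4, α_1+α_2+α_3+α_4}, {α_2, α_1+α_2+α_3, α_1+α_2+α_4, α_2+α_3+α_4}, and {α_1, α_3, α_4, α_1+2α_2+α_3+α_4}; moreover these are the only quadruples of mutually orthogonal positive roots. -/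
/-!
Writing a positive root as `∑ cᵢ αᵢ`, the inner product of two positive roots is `cᵀ A d` with
`A` the Cartan matrix of `D₄`, so the whole configuration is encoded in a `12 × 12` integer
matrix that can be checked by computation. It shows that two positive roots are orthogonal
exactly when they are distinct members of the same quadruple, and that `⟪β, γ⟫ = 2` forces
`β = γ`, so distinct coefficient vectors give distinct roots. Four mutually orthogonal positive
roots therefore all lie in the quadruple of the first one, which has only four elements.
-/

open scoped RealInnerProductSpace
open Set Function Matrix

section Fibers

variable {ι κ α : Type*} {r : ι → α} (f : ι → κ) {R : α → α → Prop}

theorem pairwise_image_fiber (hR : ∀ k l, k ≠ l → f k = f l → R (r k) (r l)) (c : κ) :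
    (r '' (f ⁻¹' {c})).Pairwise R := by
  rintro _ ⟨k, hk, rfl⟩ _ ⟨l, hl, rfl⟩ hkl
  exact hR k l (ne_of_apply_ne r hkl) (hk.trans hl.symm)

theorem exists_eq_image_fiber_of_pairwise [Finite ι] (hr : Injective r)
    (hR : ∀ k l, k ≠ l → R (r k) (r l) → f k = f l) {n : ℕ} (hn : ∀ c, (f ⁻¹' {c}).ncard = n)
    {B : Set α} (hBr : B ⊆ range r) (hB : B.Pairwise R) (hBne : B.Nonempty) (hBn : B.ncard = n) :
    ∃ c, B = r '' (f ⁻¹' {c}) := by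
  obtain ⟨_, hb⟩ := hBne
  obtain ⟨k₀, rfl⟩ := hBr hb
  refine ⟨f k₀, eq_of_subset_of_ncard_le ?_ ?_ (toFinite _)⟩
  · intro x hx
    obtain ⟨k, rfl⟩ := hBr hx
    refine ⟨k, ?_, rfl⟩
    obtain rfl | hk := eq_or_ne k k₀
    · rfl
    · exact (hR k₀ k hk.symm (hB hb hx (hr.ne hk.symm))).symm
  · rw [ncard_image_of_injective _ hr, hn, hBn]

end Fibers

namespace D4

def posRootCoeff : Fin 12 → Fin 4 → ℤ :=
  ![![1, 0, 0, 0], ![0, 1, 0, 0], ![0, 0, 1, 0], ![0, 0, 0, 1],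
    ![1, 1, 0, 0], ![0, 1, 1, 0], ![0, 1, 0, 1],
    ![1, 1, 1, 0], ![1, 1, 0, 1], ![0, 1, 1, 1],
    ![1, 1, 1, 1], ![1, 2, 1, 1]]

def posRootGram (k l : Fin 12) : ℤ := posRootCoeff k ⬝ᵥ CartanMatrix.D 4 *ᵥ posRootCoeff l

def quadrupleIndex : Fin 12 → Fin 3 := ![2, 1, 2, 2, 0, 0, 0, 1, 1, 1, 0, 2]

theorem posRootGram_eq_zero_iff (k l : Fin 12) :
    posRootGram k l = 0 ↔ k ≠ l ∧ quadrupleIndex k = quadrupleIndex l := by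
  revert k l; decide

theorem posRootGram_eq_two_iff (k l : Fin 12) : posRootGram k l = 2 ↔ k = l := by
  revert k l; decide

theorem ncard_quadrupleIndex_fiber (c : Fin 3) : (quadrupleIndex ⁻¹' {c}).ncard = 4 := by
  have hfiber : quadrupleIndex ⁻¹' {c} = ↑(Finset.univ.filter (quadrupleIndex · = c)) := by
    ext; simp
  rw [hfiber, ncard_coe_finset]
  clear hfiber; revert c; decide

variable {V : Type*} [NormedAddCommGroup V] [InnerProductSpace ℝ V] (a : Fin 4 → V)

def posRoot (k : Fin 12) : V := ∑ i, (posRootCoeff k i : ℝ) • a i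

variable {a}

theorem inner_posRoot (ha : ∀ i j, ⟪a i, a j⟫ = (CartanMatrix.D 4 i j : ℝ)) (k l : Fin 12) :
    ⟪posRoot a k, posRoot a l⟫ = posRootGram k l := by
  have hgram : gram ℝ a = (CartanMatrix.D 4).map (Int.castRingHom ℝ) := by
    ext i j; exact ha i j
  rw [posRoot, posRoot, ← star_dotProduct_gram_mulVec, star_trivial, hgram, posRootGram]
  change _ = Int.castRingHom ℝ _
  simp only [RingHom.map_dotProduct, Function.comp_def, RingHom.map_mulVec]
  rfl

theorem posRoot_injective (ha : ∀ i j, ⟪a i, a j⟫ = (CartanMatrix.D 4 i j : ℝ)) :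
    Injective (posRoot a) := by
  intro k l hkl
  have h : ⟪posRoot a k, posRoot a l⟫ = ⟪posRoot a l, posRoot a l⟫ := by rw [hkl]
  rw [inner_posRoot ha, inner_posRoot ha, (posRootGram_eq_two_iff l l).2 rfl] at h
  exact (posRootGram_eq_two_iff k l).1 (by exact_mod_cast h)

theorem inner_posRoot_eq_zero_iff (ha : ∀ i j, ⟪a i, a j⟫ = (CartanMatrix.D 4 i j : ℝ))
    (k l : Fin 12) :
    ⟪posRoot a k, posRoot a l⟫ = 0 ↔ k ≠ l ∧ quadrupleIndex k = quadrupleIndex l := by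
  rw [inner_posRoot ha, Int.cast_eq_zero, posRootGram_eq_zero_iff]

variable (a)

theorem range_posRoot : range (posRoot a) = {a 0, a 1, a 2, a 3, a 0 + a 1, a 1 + a 2, a 1 + a 3,
      a 0 + a 1 + a 2, a 0 + a 1 + a 3, a 1 + a 2 + a 3,
      a 0 + a 1 + a 2 + a 3, a 0 + (2 : ℝ) • a 1 + a 2 + a 3} := by
  ext x
  simp [Fin.exists_fin_succ, posRoot, posRootCoeff, Fin.sum_univ_four, eq_comm]

theorem image_posRoot_fiber_zero : posRoot a '' (quadrupleIndex ⁻¹' {0}) =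
    {a 0 + a 1, a 1 + a 2, a 1 + a 3, a 0 + a 1 + a 2 + a 3} := by
  ext x
  simp [Fin.exists_fin_succ, quadrupleIndex, posRoot, posRootCoeff, Fin.sum_univ_four, eq_comm]

theorem image_posRoot_fiber_one : posRoot a '' (quadrupleIndex ⁻¹' {1}) =
    {a 1, a 0 + a 1 + a 2, a 0 + a 1 + a 3, a 1 + a 2 + a 3} := by
  ext x
  simp [Fin.exists_fin_succ, quadrupleIndex, posRoot, posRootCoeff, Fin.sum_univ_four, eq_comm]

theorem image_posRoot_fiber_two : posRoot a '' (quadrupleIndex ⁻¹' {2}) =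
    {a 0, a 2, a 3, a 0 + (2 : ℝ) • a 1 + a 2 + a 3} := by
  ext x
  simp [Fin.exists_fin_succ, quadrupleIndex, posRoot, posRootCoeff, Fin.sum_univ_four, eq_comm]

theorem inner_eq_cartanMatrix_D
    (hnorm : ∀ i, ⟪a i, a i⟫ = (2 : ℝ))
    (hbranch : ∀ j, j ≠ 1 → ⟪a 1, a j⟫ = (-1 : ℝ))
    (hleaf : ∀ i j, i ≠ j → i ≠ 1 → j ≠ 1 → ⟪a i, a j⟫ = (0 : ℝ)) (i j : Fin 4) :
    ⟪a i, a j⟫ = (CartanMatrix.D 4 i j : ℝ) := by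
  fin_cases i <;> fin_cases j <;>
    simp [CartanMatrix.D, hnorm, hbranch, hleaf, real_inner_comm (a 1), -inner_self_eq_norm_sq_to_K]

end D4

/-- In a root system of type `D_4` with simple roots `a 0, a 1, a 2, a 3` (where `a 1`
is the branch node), the 12 positive roots are partitioned into exactly three quadruples
of mutually orthogonal roots, and these are the only quadruples of mutually orthogonal
positive roots. -/
theorem stmt3 {V : Type*} [NormedAddCommGroup V] [InnerProductSpace ℝ V]
    (a : Fin 4 → V)
    (hnorm : ∀ i, ⟪a i, a i⟫ = (2 : ℝ))
    (hbranch : ∀ j, j ≠ 1 → ⟪a 1, a j⟫ = (-1 : ℝ))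
    (hleaf : ∀ i j, i ≠ j → i ≠ 1 → j ≠ 1 → ⟪a i, a j⟫ = (0 : ℝ))
    (Φplus : Set V)
    (hΦplus : Φplus = {a 0, a 1, a 2, a 3, a 0 + a 1, a 1 + a 2, a 1 + a 3,
      a 0 + a 1 + a 2, a 0 + a 1 + a 3, a 1 + a 2 + a 3,
      a 0 + a 1 + a 2 + a 3, a 0 + (2 : ℝ) • a 1 + a 2 + a 3})
    (Q1 Q2 Q3 : Set V)
    (hQ1 : Q1 = {a 0 + a 1, a 1 + a 2, a 1 + a 3, a 0 + a 1 + a 2 + a 3})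
    (hQ2 : Q2 = {a 1, a 0 + a 1 + a 2, a 0 + a 1 + a 3, a 1 + a 2 + a 3})
    (hQ3 : Q3 = {a 0, a 2, a 3, a 0 + (2 : ℝ) • a 1 + a 2 + a 3}) :
    (Q1 ∪ Q2 ∪ Q3 = Φplus) ∧
    Disjoint Q1 Q2 ∧ Disjoint Q1 Q3 ∧ Disjoint Q2 Q3 ∧
    (∀ Q ∈ ({Q1, Q2, Q3} : Set (Set V)), ∀ x ∈ Q, ∀ y ∈ Q, x ≠ y → ⟪x, y⟫ = (0 : ℝ)) ∧
    (∀ b1 b2 b3 b4 : V, b1 ∈ Φplus → b2 ∈ Φplus → b3 ∈ Φplus → b4 ∈ Φplus →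
      b1 ≠ b2 → b1 ≠ b3 → b1 ≠ b4 → b2 ≠ b3 → b2 ≠ b4 → b3 ≠ b4 →
      (∀ x ∈ ({b1, b2, b3, b4} : Set V), ∀ y ∈ ({b1, b2, b3, b4} : Set V),
        x ≠ y → ⟪x, y⟫ = (0 : ℝ)) →
      (({b1, b2, b3, b4} : Set V) = Q1 ∨ ({b1, b2, b3, b4} : Set V) = Q2 ∨
        ({b1, b2, b3, b4} : Set V) = Q3)) := by
  have ha := D4.inner_eq_cartanMatrix_D a hnorm hbranch hleaf
  have hinj := D4.posRoot_injective ha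
  have horth := D4.inner_posRoot_eq_zero_iff ha
  subst hΦplus hQ1 hQ2 hQ3
  rw [← D4.range_posRoot, ← D4.image_posRoot_fiber_zero, ← D4.image_posRoot_fiber_one,
    ← D4.image_posRoot_fiber_two]
  have hdisj : ∀ c d : Fin 3, c ≠ d → Disjoint (D4.posRoot a '' (D4.quadrupleIndex ⁻¹' {c}))
      (D4.posRoot a '' (D4.quadrupleIndex ⁻¹' {d})) :=
    fun c d hcd => (disjoint_image_iff hinj).2 (disjoint_singleton.2 hcd |>.preimage _)
  refine ⟨?_, hdisj 0 1 (by decide), hdisj 0 2 (by decide), hdisj 1 2 (by decide), ?_, ?_⟩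
  · rw [← image_union, ← image_union, ← preimage_union, ← preimage_union, ← image_univ]
    refine congrArg _ (eq_univ_of_forall fun k => ?_)
    simp only [mem_preimage, mem_union, mem_singleton_iff]
    omega
  · rintro Q (rfl | rfl | rfl) <;>
      exact pairwise_image_fiber _ (fun k l hkl h => (horth k l).2 ⟨hkl, h⟩) _
  · intro b1 b2 b3 b4 h1 h2 h3 h4 n12 n13 n14 n23 n24 n34 hperp
    obtain ⟨c, hc⟩ := exists_eq_image_fiber_of_pairwise D4.quadrupleIndex hinj
      (fun k l _ h => ((horth k l).1 h).2) D4.ncard_quadrupleIndex_fiber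
      (by simp [insert_subset_iff, *]) hperp (insert_nonempty _ _)
      (ncard_eq_four.2 ⟨b1, b2, b3, b4, n12, n13, n14, n23, n24, n34, rfl⟩)
    rw [hc]
    fin_cases c <;> simp
end

section
/- In type D_n, four positive roots form a coplanar quadruple (a mutually orthogonal set summing to twice a root) if and only if they are of the form {ε_i + ε_j, ε_i − ε_j, ε_k + ε_l, ε_k − ε_l} for four distinct indices i, j, k, l with i < j and k < l. -/
/-!
Write each positive root as `ε_i + s ε_j` with `i < j` and `s = ±1`. Two such roots are
orthogonal exactly when their index pairs are disjoint, or when they are *partners*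
`ε_i ± ε_j` with the same pair. In a coplanar quadruple every root has its partner among
the other three: otherwise the coordinate at its smaller index in `b₀ + b₁ + b₂ + b₃` would
be `1`, while every coordinate of `2γ` is even. Partnership is an involution without fixed
points of the four roots, so they split into two partner pairs, and the pairs are disjoint
because roots from different pairs are orthogonal without being partners. Conversely such
four roots are visibly orthogonal and sum to `2(ε_i + ε_k)`.
-/

open Matrix Function Set

theorem Fin.range_four {α : Type*} (f : Fin 4 → α) : range f = {f 0, f 1, f 2, f 3} := by
  ext; simp [Fin.exists_fin_succ, eq_comm]

theorem Function.Injective.exists_perm_eq_comp {ι α : Type*} {f g : ι → α} (hf : Injective f)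
    (hg : Injective g) (h : range f = range g) : ∃ σ : Equiv.Perm ι, f = g ∘ σ := by
  refine ⟨(Equiv.ofInjective f hf).trans
    ((Equiv.setCongr h).trans (Equiv.ofInjective g hg).symm), ?_⟩
  ext x
  simp [Equiv.apply_ofInjective_symm]

theorem Fin.exists_perm_pairs_of_involutive {f : Fin 4 → Fin 4} (hfix : ∀ p, f p ≠ p)
    (hf : Involutive f) : ∃ σ : Equiv.Perm (Fin 4), f (σ 0) = σ 1 ∧ f (σ 2) = σ 3 := by
  have hcases : (f 0 = 1 ∧ f 2 = 3) ∨ (f 0 = 2 ∧ f 1 = 3) ∨ (f 0 = 3 ∧ f 2 = 1) := by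
    have hvec : f = ![f 0, f 1, f 2, f 3] := by ext p; fin_cases p <;> rfl
    unfold Involutive at hf
    rw [hvec] at hfix hf ⊢
    clear hvec
    generalize f 0 = a, f 1 = b, f 2 = c, f 3 = d at *
    revert a b c d
    decide
  rcases hcases with h | h | h
  · exact ⟨1, h⟩
  · exact ⟨Equiv.swap 1 2, by simpa [Equiv.swap_apply_of_ne_of_ne] using h⟩
  · exact ⟨Equiv.swap 1 3, by simpa [Equiv.swap_apply_of_ne_of_ne] using h⟩

namespace RootSystemD

variable {n : ℕ}

def signedRoot (i j : Fin n) (s : ℝ) : Fin n → ℝ :=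
  Pi.single i 1 + s • Pi.single j 1

section signedRoot

variable {i j k l x : Fin n} {s t : ℝ}

theorem signedRoot_one : signedRoot i j 1 = Pi.single i 1 + Pi.single j 1 := by
  simp [signedRoot]

theorem signedRoot_neg_one : signedRoot i j (-1) = Pi.single i 1 - Pi.single j 1 := by
  simp [signedRoot, sub_eq_add_neg]

theorem signedRoot_apply :
    signedRoot i j s x = (if x = i then 1 else 0) + s * if x = j then 1 else 0 := by
  simp [signedRoot, Pi.single_apply]

theorem signedRoot_dotProduct :
    signedRoot i j s ⬝ᵥ signedRoot k l t = signedRoot i j s k + t * signedRoot i j s l := by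
  simp [signedRoot, dotProduct_add, dotProduct_smul, mul_comm]

theorem signedRoot_dotProduct_self (hij : i ≠ j) (hs : s = 1 ∨ s = -1) :
    signedRoot i j s ⬝ᵥ signedRoot i j s = 2 := by
  rw [signedRoot_dotProduct, signedRoot_apply, signedRoot_apply]
  rcases hs with rfl | rfl <;> simp [hij, hij.symm] <;> norm_num

theorem partner_or_disjoint_of_signedRoot_dotProduct_eq_zero (hij : i < j) (hkl : k < l)
    (hs : s = 1 ∨ s = -1) (ht : t = 1 ∨ t = -1)
    (h : signedRoot i j s ⬝ᵥ signedRoot k l t = 0) :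
    (k = i ∧ l = j ∧ t = -s) ∨ (i ≠ k ∧ i ≠ l ∧ j ≠ k ∧ j ≠ l) := by
  rw [signedRoot_dotProduct, signedRoot_apply, signedRoot_apply] at h
  rcases hs with rfl | rfl <;> rcases ht with rfl | rfl <;> grind

theorem pair_signedRoot (hs : s = 1 ∨ s = -1) :
    ({signedRoot i j s, signedRoot i j (-s)} : Set (Fin n → ℝ)) =
      {Pi.single i 1 + Pi.single j 1, Pi.single i 1 - Pi.single j 1} := by
  rcases hs with rfl | rfl
  · rw [signedRoot_one, signedRoot_neg_one]
  · rw [neg_neg, signedRoot_one, signedRoot_neg_one, Set.pair_comm]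

theorem exists_signedRoot_of_exists_eq {v : Fin n → ℝ}
    (h : ∃ i j : Fin n, i < j ∧
      (v = Pi.single i 1 + Pi.single j 1 ∨ v = Pi.single i 1 - Pi.single j 1)) :
    ∃ i j s, i < j ∧ (s = 1 ∨ s = -1) ∧ v = signedRoot i j s := by
  obtain ⟨i, j, hij, rfl | rfl⟩ := h
  · exact ⟨i, j, 1, hij, .inl rfl, signedRoot_one.symm⟩
  · exact ⟨i, j, -1, hij, .inr rfl, signedRoot_neg_one.symm⟩

end signedRoot

theorem two_smul_apply_ne_one {u v x : Fin n} {s t : ℝ} (hs : s = 1 ∨ s = -1)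
    (ht : t = 1 ∨ t = -1) :
    ((2 : ℝ) • (s • Pi.single u 1 + t • Pi.single v 1 : Fin n → ℝ)) x ≠ 1 := by
  simp only [Pi.smul_apply, Pi.add_apply, Pi.single_apply, smul_eq_mul]
  rcases hs with rfl | rfl <;> rcases ht with rfl | rfl <;> split_ifs <;> norm_num

section Quadruple

variable {b : Fin 4 → Fin n → ℝ} {I J : Fin 4 → Fin n} {S : Fin 4 → ℝ}

theorem exists_partner (hb : ∀ p, b p = signedRoot (I p) (J p) (S p)) (hIJ : ∀ p, I p < J p)
    (hS : ∀ p, S p = 1 ∨ S p = -1) (horth : ∀ p q, p ≠ q → b p ⬝ᵥ b q = 0)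
    (hsum : ∀ x, ∑ q, b q x ≠ 1) (p : Fin 4) :
    ∃ q ≠ p, I q = I p ∧ J q = J p ∧ S q = -S p := by
  by_contra! hnone
  apply hsum (I p)
  rw [Finset.sum_eq_single p _ (by simp), hb, signedRoot_apply]
  · simp [(hIJ p).ne]
  intro q _ hqp
  have hpq := horth p q hqp.symm
  rw [hb, hb] at hpq
  rcases partner_or_disjoint_of_signedRoot_dotProduct_eq_zero (hIJ p) (hIJ q) (hS p) (hS q) hpq
    with ⟨hI, hJ, hS'⟩ | ⟨hik, hil, -, -⟩
  · exact absurd hS' (hnone q hqp hI hJ)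
  · rw [hb, signedRoot_apply, if_neg hik, if_neg hil]
    simp

theorem exists_range_eq_disjoint_pairs (hb : ∀ p, b p = signedRoot (I p) (J p) (S p))
    (hIJ : ∀ p, I p < J p) (hS : ∀ p, S p = 1 ∨ S p = -1) (hinj : Injective b)
    (horth : ∀ p q, p ≠ q → b p ⬝ᵥ b q = 0) (hsum : ∀ x, ∑ q, b q x ≠ 1) :
    ∃ i j k l : Fin n, i < j ∧ k < l ∧ i ≠ k ∧ i ≠ l ∧ j ≠ k ∧ j ≠ l ∧
      range b = {Pi.single i 1 + Pi.single j 1, Pi.single i 1 - Pi.single j 1,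
        Pi.single k 1 + Pi.single l 1, Pi.single k 1 - Pi.single l 1} := by
  choose f hfix hf using exists_partner hb hIJ hS horth hsum
  have hbf : ∀ p, b (f p) = signedRoot (I p) (J p) (-S p) := fun p => by
    rw [hb, (hf p).1, (hf p).2.1, (hf p).2.2]
  have hinv : Involutive f := fun p => hinj <| by
    rw [hbf, (hf p).1, (hf p).2.1, (hf p).2.2, neg_neg, hb]
  obtain ⟨σ, h01, h23⟩ := Fin.exists_perm_pairs_of_involutive hfix hinv
  have hpr := horth (σ 0) (σ 2) (σ.injective.ne (by decide))
  rw [hb, hb] at hpr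
  rcases partner_or_disjoint_of_signedRoot_dotProduct_eq_zero (hIJ _) (hIJ _) (hS _) (hS _) hpr
    with ⟨hI, hJ, hS'⟩ | ⟨hik, hil, hjk, hjl⟩
  · have : σ 2 = σ 1 := hinj <| by rw [← h01, hbf, hb, hI, hJ, hS']
    exact absurd (σ.injective this) (by decide)
  refine ⟨_, _, _, _, hIJ (σ 0), hIJ (σ 2), hik, hil, hjk, hjl, ?_⟩
  calc range b = range (b ∘ σ) := (σ.surjective.range_comp b).symm
    _ = {b (σ 0), b (f (σ 0))} ∪ {b (σ 2), b (f (σ 2))} := by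
      rw [Fin.range_four, h01, h23]
      simp only [Function.comp_apply, Set.insert_union, Set.singleton_union]
    _ = _ := by
      rw [hb, hbf, hb (σ 2), hbf, pair_signedRoot (hS _), pair_signedRoot (hS _)]
      simp only [Set.insert_union, Set.singleton_union]

theorem orthogonal_and_sum_of_range_eq {i j k l : Fin n} (hinj : Injective b) (hij : i < j)
    (hkl : k < l) (hik : i ≠ k) (hil : i ≠ l) (hjk : j ≠ k) (hjl : j ≠ l)
    (h : range b = {Pi.single i 1 + Pi.single j 1, Pi.single i 1 - Pi.single j 1,
        Pi.single k 1 + Pi.single l 1, Pi.single k 1 - Pi.single l 1}) :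
    (∀ p q, p ≠ q → b p ⬝ᵥ b q = 0) ∧
      ∑ p, b p = (2 : ℝ) • (Pi.single i 1 + Pi.single k 1) := by
  set v : Fin 4 → Fin n → ℝ :=
    ![signedRoot i j 1, signedRoot i j (-1), signedRoot k l 1, signedRoot k l (-1)]
  have hvorth : ∀ p q, p ≠ q → v p ⬝ᵥ v q = 0 := by
    intro p q hpq
    fin_cases p <;> fin_cases q <;>
      simp_all [v, signedRoot_dotProduct, signedRoot_apply, eq_comm, hij.ne, hkl.ne]
  have hvinj : Injective v := by
    intro p q hpq
    by_contra hne
    have h2 : v q ⬝ᵥ v q = 2 := by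
      fin_cases q <;> exact signedRoot_dotProduct_self (by simp [hij.ne, hkl.ne]) (by norm_num)
    have h0 := hvorth p q hne
    rw [hpq, h2] at h0
    norm_num at h0
  obtain ⟨σ, rfl⟩ := hinj.exists_perm_eq_comp hvinj <| by
    rw [h, Fin.range_four v]
    simp [v, signedRoot_one, signedRoot_neg_one]
  refine ⟨fun p q hpq => hvorth _ _ (σ.injective.ne hpq), ?_⟩
  change ∑ p, v (σ p) = _
  rw [Equiv.sum_comp, Fin.sum_univ_four]
  simp only [v, Matrix.cons_val, signedRoot]
  module

end Quadruple

end RootSystemD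

open RootSystemD in
/-- In type `D_n`, four distinct positive roots form a coplanar quadruple (mutually
orthogonal, summing to twice a root) iff they are `{ε_i ± ε_j, ε_k ± ε_l}` for four
distinct indices `i < j`, `k < l`. -/
theorem stmt4 (n : ℕ)
    (Pos : Set (Fin n → ℝ))
    (hPos : Pos = {v | ∃ i j : Fin n, i < j ∧
      (v = (Pi.single i 1 : Fin n → ℝ) + (Pi.single j 1 : Fin n → ℝ) ∨
       v = (Pi.single i 1 : Fin n → ℝ) - (Pi.single j 1 : Fin n → ℝ))})
    (Φ : Set (Fin n → ℝ))
    (hΦ : Φ = {v | ∃ (i j : Fin n) (s t : ℝ), i < j ∧ (s = 1 ∨ s = -1) ∧ (t = 1 ∨ t = -1) ∧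
      v = s • (Pi.single i 1 : Fin n → ℝ) + t • (Pi.single j 1 : Fin n → ℝ)})
    (b : Fin 4 → (Fin n → ℝ)) (hb : ∀ m, b m ∈ Pos) (hdist : Function.Injective b) :
    ((∀ p q, p ≠ q → (∑ m, b p m * b q m) = 0) ∧
      ∃ γ ∈ Φ, b 0 + b 1 + b 2 + b 3 = (2 : ℝ) • γ) ↔
    (∃ i j k l : Fin n, i < j ∧ k < l ∧ i ≠ k ∧ i ≠ l ∧ j ≠ k ∧ j ≠ l ∧
      ({b 0, b 1, b 2, b 3} : Set (Fin n → ℝ)) =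
        {(Pi.single i 1 : Fin n → ℝ) + (Pi.single j 1 : Fin n → ℝ),
         (Pi.single i 1 : Fin n → ℝ) - (Pi.single j 1 : Fin n → ℝ),
         (Pi.single k 1 : Fin n → ℝ) + (Pi.single l 1 : Fin n → ℝ),
         (Pi.single k 1 : Fin n → ℝ) - (Pi.single l 1 : Fin n → ℝ)}) := by
  subst hPos hΦ
  rw [← Fin.range_four b, ← Fin.sum_univ_four]
  constructor
  · rintro ⟨horth, _, ⟨u, v, s, t, -, hs, ht, rfl⟩, hsum⟩
    choose I J S hIJ hS hbIJS using fun m => exists_signedRoot_of_exists_eq (hb m)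
    refine exists_range_eq_disjoint_pairs hbIJS hIJ hS hdist horth fun x => ?_
    rw [← Finset.sum_apply, hsum]
    exact two_smul_apply_ne_one hs ht
  · rintro ⟨i, j, k, l, hij, hkl, hik, hil, hjk, hjl, hrange⟩
    obtain ⟨horth, hsum⟩ := orthogonal_and_sum_of_range_eq hdist hij hkl hik hil hjk hjl hrange
    refine ⟨horth, _, ?_, hsum⟩
    rcases hik.lt_or_gt with h | h
    · exact ⟨i, k, 1, 1, h, .inl rfl, .inl rfl, by simp⟩
    · exact ⟨k, i, 1, 1, h, .inl rfl, .inl rfl, by simp [add_comm]⟩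
end

section
/- The Weyl group of type D_n (n even, n ≥ 4), acting as signed permutations with an even number of sign changes on ℝ^n, acts transitively on the set of maximal orthogonal sets of roots {±(ε_{i_1}+ε_{j_1}), ±(ε_{i_1}−ε_{j_1}), ..., ±(ε_{i_k}+ε_{j_k}), ±(ε_{i_k}−ε_{j_k})} where n = 2k. -/
/-!
A maximal orthogonal set of roots is determined by a fixed-point-free involution `f` of the
coordinates (the pairing `i ↔ f i`). All such involutions have cycle type `(2, …, 2)`, so any
two are conjugate by a permutation `π`, and the permutation matrix of `π` (no sign changes at
all, hence in `W(D_n)`) carries the root set of one pairing onto that of the other.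
-/

open Equiv

section Involution

variable {α : Type*}

lemma Function.Involutive.cycleType_toPerm_of_forall_ne [Fintype α] [DecidableEq α] {f : α → α}
    (hf : Function.Involutive f) (hne : ∀ x, f x ≠ x) :
    (hf.toPerm f).cycleType = Multiset.replicate (Fintype.card α / 2) 2 := by
  have hrep := Perm.cycleType_of_pow_prime_eq_one (p := 2) (σ := hf.toPerm f)
    (Perm.ext fun x => hf x)
  have hsupp : (hf.toPerm f).support = Finset.univ := by
    ext x; simpa using hne x
  have hsum := (hf.toPerm f).sum_cycleType
  rw [hsupp, Finset.card_univ, hrep, Multiset.sum_replicate, smul_eq_mul] at hsum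
  rw [hrep, ← hsum, Nat.mul_div_cancel _ two_pos]

theorem exists_perm_conj_of_involutive [Finite α] {f₁ f₂ : α → α}
    (h₁ : Function.Involutive f₁) (hne₁ : ∀ x, f₁ x ≠ x)
    (h₂ : Function.Involutive f₂) (hne₂ : ∀ x, f₂ x ≠ x) :
    ∃ π : Perm α, ∀ x, π (f₁ x) = f₂ (π x) := by
  classical
  have := Fintype.ofFinite α
  obtain ⟨π, hπ⟩ := Perm.isConj_iff_cycleType_eq.mpr
    ((h₁.cycleType_toPerm_of_forall_ne hne₁).trans (h₂.cycleType_toPerm_of_forall_ne hne₂).symm)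
  exact ⟨π, fun x => congr($hπ x)⟩

end Involution

section MatchingRoots

variable {R α : Type*} [Ring R]

/-- The root set of the pairing `f` without the normalisation `i < f i`, which makes its
transport under a permutation of coordinates straightforward. -/
def matchingRoots [DecidableEq α] (f : α → α) : Set (α → R) :=
  {v | ∃ (i : α) (s : R), (s = 1 ∨ s = -1) ∧
    (v = s • (Pi.single i 1 + Pi.single (f i) 1) ∨ v = s • (Pi.single i 1 - Pi.single (f i) 1))}

lemma setOf_lt_eq_matchingRoots [LinearOrder α] {f : α → α} (hf : Function.Involutive f)
    (hne : ∀ x, f x ≠ x) :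
    {v : α → R | ∃ (i : α) (s : R), (s = 1 ∨ s = -1) ∧ i < f i ∧
      (v = s • (Pi.single i 1 + Pi.single (f i) 1) ∨
        v = s • (Pi.single i 1 - Pi.single (f i) 1))} = matchingRoots f := by
  refine Set.Subset.antisymm (fun v ⟨i, s, hs, _, hv⟩ => ⟨i, s, hs, hv⟩) ?_
  rintro v ⟨i, s, hs, hv⟩
  rcases (hne i).lt_or_gt with hlt | hlt
  · refine ⟨f i, ?_⟩
    rcases hv with rfl | rfl
    · exact ⟨s, hs, by rwa [hf], Or.inl (by rw [hf, add_comm])⟩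
    · refine ⟨-s, hs.symm.imp (fun h => by simp [h]) (fun h => by simp [h]), by rwa [hf],
        Or.inr ?_⟩
      rw [hf, neg_smul, ← smul_neg, neg_sub]
  · exact ⟨i, s, hs, hlt, hv⟩

variable [DecidableEq α]

lemma funCongrLeft_symm_single {M : Type*} [AddCommMonoid M] [Module R M] (π : Perm α)
    (i : α) (x : M) :
    LinearEquiv.funCongrLeft R M π.symm (Pi.single i x) = Pi.single (π i) x :=
  Pi.single_comp_equiv π.symm i x

lemma image_funCongrLeft_matchingRoots {f₁ f₂ : α → α} {π : Perm α}
    (hπ : ∀ x, π (f₁ x) = f₂ (π x)) :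
    LinearEquiv.funCongrLeft R R π.symm '' matchingRoots f₁ = matchingRoots f₂ := by
  set g := LinearEquiv.funCongrLeft R R π.symm
  have hg : ∀ i (s : R),
      g (s • (Pi.single i 1 + Pi.single (f₁ i) 1)) =
        s • (Pi.single (π i) 1 + Pi.single (f₂ (π i)) 1) ∧
      g (s • (Pi.single i 1 - Pi.single (f₁ i) 1)) =
        s • (Pi.single (π i) 1 - Pi.single (f₂ (π i)) 1) := fun i s => by
    simp only [map_smul, map_add, map_sub, g, funCongrLeft_symm_single, hπ, and_self]
  ext v
  constructor
  · rintro ⟨w, ⟨i, s, hs, rfl | rfl⟩, rfl⟩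
    · exact ⟨π i, s, hs, Or.inl (hg i s).1⟩
    · exact ⟨π i, s, hs, Or.inr (hg i s).2⟩
  · rintro ⟨j, s, hs, hv⟩
    obtain ⟨i, rfl⟩ := π.surjective j
    rcases hv with rfl | rfl
    · exact ⟨_, ⟨i, s, hs, Or.inl rfl⟩, (hg i s).1⟩
    · exact ⟨_, ⟨i, s, hs, Or.inr rfl⟩, (hg i s).2⟩

end MatchingRoots

theorem stmt6_general (n : ℕ)
    (IsMaxOrth : Set (Fin n → ℝ) → Prop)
    (hdef : ∀ R, IsMaxOrth R ↔ ∃ f : Fin n → Fin n, Function.Involutive f ∧ (∀ i, f i ≠ i) ∧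
      R = {v | ∃ (i : Fin n) (s : ℝ), (s = 1 ∨ s = -1) ∧ i < f i ∧
        (v = s • ((Pi.single i 1 : Fin n → ℝ) + (Pi.single (f i) 1 : Fin n → ℝ)) ∨
         v = s • ((Pi.single i 1 : Fin n → ℝ) - (Pi.single (f i) 1 : Fin n → ℝ)))})
    (R1 R2 : Set (Fin n → ℝ)) (h1 : IsMaxOrth R1) (h2 : IsMaxOrth R2) :
    ∃ g : (Fin n → ℝ) ≃ₗ[ℝ] (Fin n → ℝ),
      (∃ (π : Equiv.Perm (Fin n)) (s : Fin n → ℝ),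
        (∀ i, s i = 1 ∨ s i = -1) ∧ (∏ i, s i) = 1 ∧
        ∀ i, g (Pi.single i 1 : Fin n → ℝ) = s i • (Pi.single (π i) 1 : Fin n → ℝ)) ∧
      g '' R1 = R2 := by
  obtain ⟨f₁, hf₁, hne₁, rfl⟩ := (hdef R1).1 h1
  obtain ⟨f₂, hf₂, hne₂, rfl⟩ := (hdef R2).1 h2
  obtain ⟨π, hπ⟩ := exists_perm_conj_of_involutive hf₁ hne₁ hf₂ hne₂
  refine ⟨LinearEquiv.funCongrLeft ℝ ℝ π.symm,
    ⟨π, 1, fun _ => Or.inl rfl, Finset.prod_const_one, fun i => ?_⟩, ?_⟩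
  · rw [Pi.one_apply, one_smul, funCongrLeft_symm_single]
  · rw [setOf_lt_eq_matchingRoots hf₁ hne₁, setOf_lt_eq_matchingRoots hf₂ hne₂]
    exact image_funCongrLeft_matchingRoots hπ

/-- The Weyl group of type `D_n` (`n = 2k` even, `n ≥ 4`), acting as signed permutations
with an even number of sign changes, acts transitively on the maximal orthogonal sets of
roots `{±(ε_i ± ε_j)}` indexed by perfect matchings. -/
theorem stmt6 (k : ℕ) (hk : 2 ≤ k) (n : ℕ) (hn : n = 2 * k)
    (IsMaxOrth : Set (Fin n → ℝ) → Prop)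
    (hdef : ∀ R, IsMaxOrth R ↔ ∃ f : Fin n → Fin n, Function.Involutive f ∧ (∀ i, f i ≠ i) ∧
      R = {v | ∃ (i : Fin n) (s : ℝ), (s = 1 ∨ s = -1) ∧ i < f i ∧
        (v = s • ((Pi.single i 1 : Fin n → ℝ) + (Pi.single (f i) 1 : Fin n → ℝ)) ∨
         v = s • ((Pi.single i 1 : Fin n → ℝ) - (Pi.single (f i) 1 : Fin n → ℝ)))})
    (R1 R2 : Set (Fin n → ℝ)) (h1 : IsMaxOrth R1) (h2 : IsMaxOrth R2) :
    ∃ g : (Fin n → ℝ) ≃ₗ[ℝ] (Fin n → ℝ),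
      (∃ (π : Equiv.Perm (Fin n)) (s : Fin n → ℝ),
        (∀ i, s i = 1 ∨ s i = -1) ∧ (∏ i, s i) = 1 ∧
        ∀ i, g (Pi.single i 1 : Fin n → ℝ) = s i • (Pi.single (π i) 1 : Fin n → ℝ)) ∧
      g '' R1 = R2 :=
  stmt6_general n IsMaxOrth hdef R1 R2 h1 h2
end

section
/- The generating function of the statistic λ(m) = C(m) + 2N(m) over all perfect matchings of {1,...,2k} factorizes as the product of odd quantum integers: Σ_m q^{λ(m)} = Π_{i=2}^{k} [2i−1]_q, where [d]_q = 1 + q + ... + q^{d−1}. -/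
/-!
Removing the arc `{1, p}` through the first point leaves a perfect matching of the remaining
`2k - 2` points. Every arc crossing `{1, p}` has exactly one endpoint among the `p - 2` points
strictly between `1` and `p`, every arc nested under it has both, and no arc nests over it.
Hence that arc contributes exactly `p - 2` to `λ = C + 2N`, and summing over
`p = 2, …, 2k` multiplies the generating function for `2k - 2` points by `[2k - 1]_q`.
-/

/-- Crossings of a matching, as quadruples `a < b < c < d` with blocks `{a,c}, {b,d}`. -/
def matchCrossings (N : ℕ) (f : Fin N → Fin N) : Set (Fin N × Fin N × Fin N × Fin N) :=
  {q | q.1 < q.2.1 ∧ q.2.1 < q.2.2.1 ∧ q.2.2.1 < q.2.2.2 ∧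
    f q.1 = q.2.2.1 ∧ f q.2.1 = q.2.2.2}

/-- Nestings of a matching, as quadruples `a < b < c < d` with blocks `{a,d}, {b,c}`. -/
def matchNestings (N : ℕ) (f : Fin N → Fin N) : Set (Fin N × Fin N × Fin N × Fin N) :=
  {q | q.1 < q.2.1 ∧ q.2.1 < q.2.2.1 ∧ q.2.2.1 < q.2.2.2 ∧
    f q.1 = q.2.2.2 ∧ f q.2.1 = q.2.2.1}

open Finset

lemma two_mul_card_filter_lt_apply {α : Type*} [LinearOrder α] {g : α → α}
    (hg : Function.Involutive g) (hfix : ∀ x, g x ≠ x) {s : Finset α}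
    (hs : ∀ x ∈ s, g x ∈ s) : 2 * #{x ∈ s | x < g x} = #s := by
  have hswap : #{x ∈ s | ¬x < g x} = #{x ∈ s | x < g x} := by
    refine card_nbij' g g ?_ ?_ (fun x _ => hg x) (fun x _ => hg x) <;>
      intro x hx <;> simp only [coe_filter, Set.mem_ofPred_eq, hg x] at hx ⊢
    · exact ⟨hs x hx.1, lt_of_le_of_ne (not_lt.1 hx.2) (hfix x)⟩
    · exact ⟨hs x hx.1, not_lt.2 hx.2.le⟩
  rw [← card_filter_add_card_filter_not (s := s) (fun x => x < g x), hswap, two_mul]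

lemma card_filter_apply_notMem_add_two_mul {α : Type*} [LinearOrder α] [DecidableEq α]
    {g : α → α} (hg : Function.Involutive g) (hfix : ∀ x, g x ≠ x) (s : Finset α) :
    #{x ∈ s | g x ∉ s} + 2 * #{x ∈ s | x < g x ∧ g x ∈ s} = #s := by
  have hclosed : ∀ x ∈ s.filter (g · ∈ s), g x ∈ s.filter (g · ∈ s) := by
    intro x hx; simp only [mem_filter, hg x] at hx ⊢; exact ⟨hx.2, hx.1⟩
  rw [← card_filter_add_card_filter_not (s := s) (fun x => g x ∈ s),
    ← two_mul_card_filter_lt_apply hg hfix hclosed, filter_filter, add_comm]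
  simp only [and_comm]

variable {n : ℕ}

-- The increasing enumeration of the points of `Fin (n + 2)` off the arc `{0, p.succ}`.
def outsideArc (p : Fin (n + 1)) : Fin n ↪o Fin (n + 2) :=
  (Fin.succAboveOrderEmb p).trans (Fin.succOrderEmb (n + 1))

lemma outsideArc_apply (p : Fin (n + 1)) (x : Fin n) :
    outsideArc p x = (p.succAbove x).succ := rfl

@[simp] lemma zero_lt_outsideArc (p : Fin (n + 1)) (x : Fin n) : 0 < outsideArc p x :=
  Fin.succ_pos _

@[simp] lemma outsideArc_ne_zero (p : Fin (n + 1)) (x : Fin n) : outsideArc p x ≠ 0 :=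
  Fin.succ_ne_zero _

@[simp] lemma outsideArc_ne_succ (p : Fin (n + 1)) (x : Fin n) : outsideArc p x ≠ p.succ := by
  simp [outsideArc_apply, Fin.succAbove_ne]

lemma outsideArc_lt_succ_iff (p : Fin (n + 1)) (x : Fin n) :
    outsideArc p x < p.succ ↔ (x : ℕ) < p := by
  rw [outsideArc_apply, Fin.succ_lt_succ_iff, Fin.succAbove_lt_iff_castSucc_lt, Fin.lt_def,
    Fin.val_castSucc]

lemma succ_lt_outsideArc_iff (p : Fin (n + 1)) (x : Fin n) :
    p.succ < outsideArc p x ↔ (p : ℕ) ≤ x := by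
  rw [outsideArc_apply, Fin.succ_lt_succ_iff, Fin.lt_succAbove_iff_le_castSucc, Fin.le_def,
    Fin.val_castSucc]

lemma eq_zero_or_eq_succ_or_exists_outsideArc_eq (p : Fin (n + 1)) (y : Fin (n + 2)) :
    y = 0 ∨ y = p.succ ∨ ∃ x, outsideArc p x = y := by
  cases y using Fin.cases with
  | zero => exact .inl rfl
  | succ y =>
    cases y using Fin.succAboveCases p with
    | x => exact .inr (.inl rfl)
    | p x => exact .inr (.inr ⟨x, rfl⟩)

-- The matching of `Fin (n + 2)` made of the arc `{0, p.succ}` and of `g` moved off that arc.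
def addArc (p : Fin (n + 1)) (g : Fin n → Fin n) : Fin (n + 2) → Fin (n + 2) :=
  Fin.cons p.succ (Fin.insertNth p 0 (outsideArc p ∘ g))

@[simp] lemma addArc_zero (p : Fin (n + 1)) (g : Fin n → Fin n) : addArc p g 0 = p.succ := rfl

@[simp] lemma addArc_succ_self (p : Fin (n + 1)) (g : Fin n → Fin n) :
    addArc p g p.succ = 0 := by
  simp [addArc]

@[simp] lemma addArc_outsideArc (p : Fin (n + 1)) (g : Fin n → Fin n) (x : Fin n) :
    addArc p g (outsideArc p x) = outsideArc p (g x) := by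
  simp [addArc, outsideArc_apply]

def perfectMatchings (N : ℕ) : Finset (Fin N → Fin N) :=
  univ.filter fun f => (∀ x, f (f x) = x) ∧ ∀ i, f i ≠ i

lemma addArc_mem_perfectMatchings (p : Fin (n + 1)) {g : Fin n → Fin n}
    (hg : g ∈ perfectMatchings n) : addArc p g ∈ perfectMatchings (n + 2) := by
  simp only [perfectMatchings, mem_filter, mem_univ, true_and] at hg ⊢
  refine ⟨fun y => ?_, fun y => ?_⟩ <;>
    rcases eq_zero_or_eq_succ_or_exists_outsideArc_eq p y with rfl | rfl | ⟨x, rfl⟩ <;>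
    simp [hg.1, hg.2, (Fin.succ_ne_zero p).symm]

lemma addArc_injective2 : Function.Injective2 (addArc (n := n)) := by
  intro p p' g g' h
  have hp : p = p' := Fin.succ_injective _ (by simpa using congrFun h 0)
  subst hp
  exact ⟨rfl, funext fun x =>
    (outsideArc p).injective (by simpa using congrFun h (outsideArc p x))⟩

lemma exists_addArc_eq {f : Fin (n + 2) → Fin (n + 2)} (hf : f ∈ perfectMatchings (n + 2)) :
    ∃ p, ∃ g ∈ perfectMatchings n, addArc p g = f := by
  simp only [perfectMatchings, mem_filter, mem_univ, true_and] at hf ⊢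
  obtain ⟨hinv, hfix⟩ := hf
  obtain ⟨p, hp⟩ := Fin.exists_succ_eq_of_ne_zero (hfix 0)
  have hsucc : f p.succ = 0 := by rw [hp, hinv]
  have hrestrict : ∀ x, ∃ y, outsideArc p y = f (outsideArc p x) := by
    intro x
    obtain h | h | h := eq_zero_or_eq_succ_or_exists_outsideArc_eq p (f (outsideArc p x))
    · exact absurd (by rw [← hinv (outsideArc p x), h, hp]) (outsideArc_ne_succ p x)
    · exact absurd (by rw [← hinv (outsideArc p x), h, hsucc]) (outsideArc_ne_zero p x)
    · exact h
  choose g hg using hrestrict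
  have hf_eq : addArc p g = f := by
    funext y
    rcases eq_zero_or_eq_succ_or_exists_outsideArc_eq p y with rfl | rfl | ⟨x, rfl⟩
    · simp [hp]
    · simp [hsucc]
    · simp [hg]
  refine ⟨p, g, ⟨fun x => ?_, fun x hx => ?_⟩, hf_eq⟩
  · apply (outsideArc p).injective; rw [hg, hg, hinv]
  · exact hfix (outsideArc p x) (by rw [← hg, hx])

lemma perfectMatchings_add_two_eq_image : perfectMatchings (n + 2) =
    (univ ×ˢ perfectMatchings n).image (Function.uncurry addArc) := by
  ext f
  simp only [mem_image, mem_product, mem_univ, true_and, Prod.exists]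
  constructor
  · exact exists_addArc_eq
  · rintro ⟨p, g, hg, rfl⟩
    exact addArc_mem_perfectMatchings p hg

def quadMap {α β : Type*} (e : α → β) : α × α × α × α → β × β × β × β :=
  Prod.map e (Prod.map e (Prod.map e e))

lemma matchCrossings_addArc (p : Fin (n + 1)) (g : Fin n → Fin n) :
    matchCrossings (n + 2) (addArc p g) =
      quadMap (outsideArc p) '' matchCrossings n g ∪
        (fun x => (0, outsideArc p x, p.succ, outsideArc p (g x))) ''
          {x | outsideArc p x < p.succ ∧ p.succ < outsideArc p (g x)} := by
  refine Set.Subset.antisymm ?_ ?_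
  · rintro ⟨a, b, c, d⟩ ⟨hab, hbc, hcd, hc, hd⟩
    dsimp only at *; subst c d
    rcases eq_zero_or_eq_succ_or_exists_outsideArc_eq p a with rfl | rfl | ⟨a, rfl⟩ <;>
      rcases eq_zero_or_eq_succ_or_exists_outsideArc_eq p b with rfl | rfl | ⟨b, rfl⟩ <;>
      simp_all [matchCrossings, quadMap]
  · rintro _ (⟨⟨a, b, c, d⟩, ⟨hab, hbc, hcd, hc, hd⟩, rfl⟩ | ⟨x, ⟨h1, h2⟩, rfl⟩) <;>
      simp_all [matchCrossings, quadMap]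

lemma matchNestings_addArc (p : Fin (n + 1)) (g : Fin n → Fin n) :
    matchNestings (n + 2) (addArc p g) =
      quadMap (outsideArc p) '' matchNestings n g ∪
        (fun x => (0, outsideArc p x, outsideArc p (g x), p.succ)) ''
          {x | outsideArc p x < outsideArc p (g x) ∧ outsideArc p (g x) < p.succ} := by
  refine Set.Subset.antisymm ?_ ?_
  · rintro ⟨a, b, c, d⟩ ⟨hab, hbc, hcd, hc, hd⟩
    dsimp only at *; subst c d
    rcases eq_zero_or_eq_succ_or_exists_outsideArc_eq p a with rfl | rfl | ⟨a, rfl⟩ <;>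
      rcases eq_zero_or_eq_succ_or_exists_outsideArc_eq p b with rfl | rfl | ⟨b, rfl⟩ <;>
      simp_all [matchNestings, quadMap]
  · rintro _ (⟨⟨a, b, c, d⟩, ⟨hab, hbc, hcd, hc, hd⟩, rfl⟩ | ⟨x, ⟨h1, h2⟩, rfl⟩) <;>
      simp_all [matchNestings, quadMap]

lemma ncard_crossing_add_two_mul_ncard_nested (p : Fin (n + 1)) {g : Fin n → Fin n}
    (hg : Function.Involutive g) (hfix : ∀ x, g x ≠ x) :
    {x | outsideArc p x < p.succ ∧ p.succ < outsideArc p (g x)}.ncard +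
      2 * {x | outsideArc p x < outsideArc p (g x) ∧ outsideArc p (g x) < p.succ}.ncard = p := by
  have hcount := card_filter_apply_notMem_add_two_mul hg hfix {x : Fin n | (x : ℕ) < p}
  rw [Fin.card_filter_val_lt, min_eq_right (Nat.lt_succ_iff.1 p.isLt)] at hcount
  simp only [mem_filter, mem_univ, true_and, filter_filter, not_lt] at hcount
  rw [← hcount, Set.ncard_eq_toFinset_card', Set.toFinset_ofPred, Set.ncard_eq_toFinset_card',
    Set.toFinset_ofPred]
  simp only [outsideArc_lt_succ_iff, succ_lt_outsideArc_iff, OrderEmbedding.lt_iff_lt]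
  congr 2
  exact congrArg card <| filter_congr fun x _ =>
    ⟨fun h => ⟨(Fin.lt_def.1 h.1).trans h.2, h⟩, fun h => h.2⟩

noncomputable def matchStat (N : ℕ) (f : Fin N → Fin N) : ℕ :=
  (matchCrossings N f).ncard + 2 * (matchNestings N f).ncard

lemma matchStat_addArc (p : Fin (n + 1)) {g : Fin n → Fin n} (hg : g ∈ perfectMatchings n) :
    matchStat (n + 2) (addArc p g) = matchStat n g + p := by
  simp only [perfectMatchings, mem_filter, mem_univ, true_and] at hg
  have hquad : Function.Injective (quadMap (outsideArc p)) :=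
    (outsideArc p).injective.prodMap <| (outsideArc p).injective.prodMap <|
      (outsideArc p).injective.prodMap (outsideArc p).injective
  have hdisj {x : Fin n → Fin (n + 2) × Fin (n + 2) × Fin (n + 2)} {s : Set _} {t : Set (Fin n)} :
      Disjoint (quadMap (outsideArc p) '' s) ((fun y => (0, x y)) '' t) := by
    refine Set.disjoint_left.2 ?_
    rintro _ ⟨q, -, rfl⟩ ⟨y, -, h⟩
    exact outsideArc_ne_zero p q.1 (congrArg Prod.fst h).symm
  have hinj {x : Fin n → Fin (n + 2) × Fin (n + 2)} :
      Function.Injective fun y => ((0 : Fin (n + 2)), outsideArc p y, x y) :=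
    fun y y' h => (outsideArc p).injective (congrArg (·.2.1) h)
  rw [matchStat, matchStat, matchCrossings_addArc, matchNestings_addArc,
    Set.ncard_union_eq hdisj, Set.ncard_union_eq hdisj, Set.ncard_image_of_injective _ hquad,
    Set.ncard_image_of_injective _ hquad, Set.ncard_image_of_injective _ hinj,
    Set.ncard_image_of_injective _ hinj, ← ncard_crossing_add_two_mul_ncard_nested p hg.1 hg.2]
  ring

open Polynomial

noncomputable def matchGF (N : ℕ) : ℤ[X] :=
  ∑ f ∈ perfectMatchings N, X ^ matchStat N f

lemma matchGF_zero : matchGF 0 = 1 := by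
  simp [matchGF, perfectMatchings, matchStat, Set.eq_empty_of_isEmpty]

lemma matchGF_add_two (n : ℕ) :
    matchGF (n + 2) = matchGF n * ∑ j ∈ range (n + 1), X ^ j := by
  rw [matchGF, perfectMatchings_add_two_eq_image, sum_image addArc_injective2.uncurry.injOn,
    sum_product, ← Fin.sum_univ_eq_sum_range (fun j => (X : ℤ[X]) ^ j), mul_sum]
  refine sum_congr rfl fun p _ => ?_
  rw [matchGF, sum_mul]
  exact sum_congr rfl fun g hg => by
    rw [Function.uncurry_apply_pair, matchStat_addArc p hg, pow_add]

open Polynomial in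
/-- The generating function of `λ(m) = C(m) + 2N(m)` over all perfect matchings of
`{1,…,2k}` factorizes as the product of odd quantum integers `∏_{i=2}^{k} [2i−1]_q`. -/
theorem stmt10 (k : ℕ) :
    ∑ f ∈ Finset.univ.filter
        (fun f : Fin (2 * k) → Fin (2 * k) => (∀ x, f (f x) = x) ∧ ∀ i, f i ≠ i),
      (X : Polynomial ℤ) ^
        ((matchCrossings (2 * k) f).ncard + 2 * (matchNestings (2 * k) f).ncard) =
    ∏ i ∈ Finset.Icc 2 k, ∑ j ∈ Finset.range (2 * i - 1), (X : Polynomial ℤ) ^ j := by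
  change matchGF (2 * k) = _
  induction k with
  | zero => simp [matchGF_zero]
  | succ k ih =>
    rw [Nat.mul_succ, matchGF_add_two, ih]
    rcases Nat.eq_zero_or_pos k with rfl | hk
    · simp
    · rw [prod_Icc_succ_top (by omega)]
      rfl
end

section
/- Let Q = {β_1, β_2, β_3, β_4} be a coplanar quadruple of positive roots in a simply laced root system of type D_n (n even), E_7, or E_8, with heights h_1 ≤ h_2 ≤ h_3 ≤ h_4. Then h_1 + h_2 + h_3 ≠ h_4 and h_2 + h_3 ≠ h_1 + h_4. -/
/-!
Write `2γ = β₀ + β₁ + β₂ + β₃` with `γ` a root. Orthogonality gives `⟪βₘ, γ⟫ = 1`, so reflecting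
`γ` and then `γ - β₀` in the appropriate `βₘ` shows that `γ - β₃` and `γ - β₀ - β₃` are roots,
hence of nonzero height. As `2 ht γ = ∑ ht βₘ`, the first excluded equality would give
`ht (γ - β₃) = 0` and the second `ht (γ - β₀ - β₃) = 0`.
-/

open scoped RealInnerProductSpace

section Height

variable {ι : Type*} [Fintype ι]

theorem sum_intCast_smul_eq_zero_of_height_eq_zero {V : Type*} [AddCommGroup V] [Module ℝ V]
    {Δ : ι → V} {ht : V →ₗ[ℝ] ℝ} (hht : ∀ i, ht (Δ i) = 1) {c : ι → ℤ}
    (hc : (∀ i, 0 ≤ c i) ∨ (∀ i, c i ≤ 0)) (h0 : ht (∑ i, (c i : ℝ) • Δ i) = 0) :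
    ∑ i, (c i : ℝ) • Δ i = 0 := by
  have hsum : ∑ i, c i = 0 := by
    have hsumℝ : ∑ i, (c i : ℝ) = 0 := by simpa [hht] using h0
    exact_mod_cast hsumℝ
  have hc0 : ∀ i, c i = 0 := fun i => by
    rcases hc with hc | hc
    · exact (Finset.sum_eq_zero_iff_of_nonneg fun i _ => hc i).mp hsum i (Finset.mem_univ i)
    · exact (Finset.sum_eq_zero_iff_of_nonpos fun i _ => hc i).mp hsum i (Finset.mem_univ i)
  simp [hc0]

theorem height_ne_zero_of_mem {V : Type*} [NormedAddCommGroup V] [InnerProductSpace ℝ V]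
    {Φ : Set V} (hlen : ∀ α ∈ Φ, ⟪α, α⟫ = (2 : ℝ)) {Δ : ι → V}
    (hbase : ∀ γ ∈ Φ, ∃ c : ι → ℤ, ((∀ i, 0 ≤ c i) ∨ (∀ i, c i ≤ 0)) ∧
      γ = ∑ i, (c i : ℝ) • Δ i)
    {ht : V →ₗ[ℝ] ℝ} (hht : ∀ i, ht (Δ i) = 1) {ρ : V} (hρ : ρ ∈ Φ) : ht ρ ≠ 0 := by
  intro h0
  obtain ⟨c, hc, rfl⟩ := hbase ρ hρ
  have hlenρ := hlen _ hρ
  rw [sum_intCast_smul_eq_zero_of_height_eq_zero hht hc h0, inner_zero_left] at hlenρ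
  norm_num at hlenρ

end Height

section Roots

variable {V : Type*} [NormedAddCommGroup V] [InnerProductSpace ℝ V]

theorem sub_mem_of_inner_eq_one {Φ : Set V} (hrefl : ∀ α ∈ Φ, ∀ β ∈ Φ, β - ⟪α, β⟫ • α ∈ Φ)
    {α β : V} (hα : α ∈ Φ) (hβ : β ∈ Φ) (h : ⟪α, β⟫ = 1) : β - α ∈ Φ := by
  simpa [h] using hrefl α hα β hβ

theorem inner_sum_of_pairwise_orthogonal {κ : Type*} [Fintype κ] {β : κ → V}
    (horth : ∀ p q, p ≠ q → ⟪β p, β q⟫ = (0 : ℝ)) (m : κ) :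
    ⟪β m, ∑ p, β p⟫ = ⟪β m, β m⟫ :=
  (inner_sum _ _ _).trans <|
    Finset.sum_eq_single m (fun p _ hp => horth m p (Ne.symm hp)) (by simp)

theorem inner_eq_one_of_sum_eq_two_smul {κ : Type*} [Fintype κ] {β : κ → V}
    (hlen : ∀ m, ⟪β m, β m⟫ = (2 : ℝ)) (horth : ∀ p q, p ≠ q → ⟪β p, β q⟫ = (0 : ℝ))
    {γ : V} (hsum : ∑ p, β p = (2 : ℝ) • γ) (m : κ) : ⟪β m, γ⟫ = 1 := by
  have h := inner_sum_of_pairwise_orthogonal horth m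
  rw [hsum, real_inner_smul_right, hlen] at h
  linarith

end Roots

theorem stmt14_general {V : Type*} [NormedAddCommGroup V] [InnerProductSpace ℝ V]
    (Φ : Set V)
    (hlen : ∀ α ∈ Φ, ⟪α, α⟫ = (2 : ℝ))
    (hrefl : ∀ α ∈ Φ, ∀ β ∈ Φ, β - ⟪α, β⟫ • α ∈ Φ)
    {ι : Type*} [Fintype ι] (Δ : ι → V)
    (hbase : ∀ γ ∈ Φ, ∃ c : ι → ℤ, ((∀ i, 0 ≤ c i) ∨ (∀ i, c i ≤ 0)) ∧
      γ = ∑ i, (c i : ℝ) • Δ i)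
    (ht : V →ₗ[ℝ] ℝ) (hht : ∀ i, ht (Δ i) = 1)
    (β : Fin 4 → V) (hβΦ : ∀ m, β m ∈ Φ)
    (horth : ∀ p q, p ≠ q → ⟪β p, β q⟫ = (0 : ℝ))
    (hcop : ∃ γ ∈ Φ, β 0 + β 1 + β 2 + β 3 = (2 : ℝ) • γ) :
    ht (β 0) + ht (β 1) + ht (β 2) ≠ ht (β 3) ∧
    ht (β 1) + ht (β 2) ≠ ht (β 0) + ht (β 3) := by
  obtain ⟨γ, hγ, hsum⟩ := hcop
  have hβγ := inner_eq_one_of_sum_eq_two_smul (fun m => hlen _ (hβΦ m)) horth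
    (by rwa [Fin.sum_univ_four])
  have hmem₃ : γ - β 3 ∈ Φ := sub_mem_of_inner_eq_one hrefl (hβΦ 3) hγ (hβγ 3)
  have hmem₀₃ : γ - β 0 - β 3 ∈ Φ := by
    refine sub_mem_of_inner_eq_one hrefl (hβΦ 3)
      (sub_mem_of_inner_eq_one hrefl (hβΦ 0) hγ (hβγ 0)) ?_
    rw [inner_sub_right, hβγ, horth 3 0 (by decide), sub_zero]
  have hhtγ : 2 * ht γ = ht (β 0) + ht (β 1) + ht (β 2) + ht (β 3) := by
    simpa using (congrArg ht hsum).symm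
  refine ⟨fun h => height_ne_zero_of_mem hlen hbase hht hmem₃ ?_,
    fun h => height_ne_zero_of_mem hlen hbase hht hmem₀₃ ?_⟩ <;>
  · simp only [map_sub]
    linarith

/-- Let `Q = {β 0, β 1, β 2, β 3}` be a coplanar quadruple of positive roots in a simply
laced crystallographic root system with simple system `Δ` and height functional `ht`,
with heights `h_1 ≤ h_2 ≤ h_3 ≤ h_4`. Then `h_1 + h_2 + h_3 ≠ h_4` and
`h_2 + h_3 ≠ h_1 + h_4`. -/
theorem stmt14 {V : Type*} [NormedAddCommGroup V] [InnerProductSpace ℝ V]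
    (Φ : Set V) (hfin : Φ.Finite)
    (hlen : ∀ α ∈ Φ, ⟪α, α⟫ = (2 : ℝ))
    (hneg : ∀ α ∈ Φ, -α ∈ Φ)
    (hrefl : ∀ α ∈ Φ, ∀ β ∈ Φ, β - ⟪α, β⟫ • α ∈ Φ)
    (hcrys : ∀ α ∈ Φ, ∀ β ∈ Φ, ∃ m : ℤ, ⟪α, β⟫ = (m : ℝ))
    {ι : Type*} [Fintype ι] (Δ : ι → V) (hΔ : ∀ i, Δ i ∈ Φ)
    (hind : LinearIndependent ℝ Δ)
    (hbase : ∀ γ ∈ Φ, ∃ c : ι → ℤ, ((∀ i, 0 ≤ c i) ∨ (∀ i, c i ≤ 0)) ∧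
      γ = ∑ i, (c i : ℝ) • Δ i)
    (ht : V →ₗ[ℝ] ℝ) (hht : ∀ i, ht (Δ i) = 1)
    (β : Fin 4 → V) (hβΦ : ∀ m, β m ∈ Φ)
    (hpos : ∀ m, ∃ c : ι → ℤ, (∀ i, 0 ≤ c i) ∧ β m = ∑ i, (c i : ℝ) • Δ i)
    (horth : ∀ p q, p ≠ q → ⟪β p, β q⟫ = (0 : ℝ))
    (hcop : ∃ γ ∈ Φ, β 0 + β 1 + β 2 + β 3 = (2 : ℝ) • γ)
    (hord : ht (β 0) ≤ ht (β 1) ∧ ht (β 1) ≤ ht (β 2) ∧ ht (β 2) ≤ ht (β 3)) :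
    ht (β 0) + ht (β 1) + ht (β 2) ≠ ht (β 3) ∧
    ht (β 1) + ht (β 2) ≠ ht (β 0) + ht (β 3) :=
  stmt14_general Φ hlen hrefl Δ hbase ht hht β hβΦ horth hcop
end

section
/- For perfect matchings of {1,...,2k}, applying the transposition (i, i+1) to a matching m that does not contain the block {i, i+1} changes the crossing/nesting/alignment type of exactly one pair of blocks (the pair containing i and i+1), and leaves the type of every other pair of blocks unchanged; consequently |λ((i,i+1)·m) − λ(m)| = 1, i.e., λ changes by exactly 1, where λ(m) = C(m) + 2N(m). -/
/-- `T` is (the union of) a crossing pair of blocks of the matching `f`. -/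
def crossOn (N : ℕ) (f : Fin N → Fin N) (T : Finset (Fin N)) : Prop :=
  ∃ a b c d : Fin N, a < b ∧ b < c ∧ c < d ∧ T = {a, b, c, d} ∧ f a = c ∧ f b = d

/-- `T` is (the union of) a nesting pair of blocks of the matching `f`. -/
def nestOn (N : ℕ) (f : Fin N → Fin N) (T : Finset (Fin N)) : Prop :=
  ∃ a b c d : Fin N, a < b ∧ b < c ∧ c < d ∧ T = {a, b, c, d} ∧ f a = d ∧ f b = c

/-- `T` is (the union of) an aligned pair of blocks of the matching `f`. -/
def alignOn (N : ℕ) (f : Fin N → Fin N) (T : Finset (Fin N)) : Prop :=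
  ∃ a b c d : Fin N, a < b ∧ b < c ∧ c < d ∧ T = {a, b, c, d} ∧ f a = b ∧ f c = d

section Helpers

variable {N : ℕ}

lemma quadEq {a b c d a' b' c' d' : Fin N} (hab : a < b) (hbc : b < c) (hcd : c < d)
    (hab' : a' < b') (hbc' : b' < c') (hcd' : c' < d')
    (hset : ({a, b, c, d} : Finset (Fin N)) = {a', b', c', d'}) :
    a = a' ∧ b = b' ∧ c = c' ∧ d = d' := by
  simp only [Finset.ext_iff, Finset.mem_insert, Finset.mem_singleton] at hset
  have h1 := hset a; have h2 := hset b; have h3 := hset c; have h4 := hset d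
  have h5 := hset a'; have h6 := hset b'; have h7 := hset c'; have h8 := hset d'
  simp only [Fin.ext_iff, Fin.lt_def, true_or, or_true, true_iff, iff_true]
    at h1 h2 h3 h4 h5 h6 h7 h8 hab hbc hcd hab' hbc' hcd' ⊢
  omega

lemma swap_lt {i j x y : Fin N} (hij : (j : ℕ) = (i : ℕ) + 1)
    (hxy : x < y) (h : ¬(x = i ∧ y = j)) :
    Equiv.swap i j x < Equiv.swap i j y := by
  have hvx : ((Equiv.swap i j x : Fin N) : ℕ)
      = if x = i then (j:ℕ) else if x = j then (i:ℕ) else (x:ℕ) := by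
    rw [Equiv.swap_apply_def]; split_ifs <;> rfl
  have hvy : ((Equiv.swap i j y : Fin N) : ℕ)
      = if y = i then (j:ℕ) else if y = j then (i:ℕ) else (y:ℕ) := by
    rw [Equiv.swap_apply_def]; split_ifs <;> rfl
  rw [Fin.lt_def, hvx, hvy]
  rw [Fin.lt_def] at hxy
  have exi : x = i ↔ (x:ℕ) = i := Fin.ext_iff
  have exj : x = j ↔ (x:ℕ) = j := Fin.ext_iff
  have eyi : y = i ↔ (y:ℕ) = i := Fin.ext_iff
  have eyj : y = j ↔ (y:ℕ) = j := Fin.ext_iff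
  have h' : ¬((x:ℕ) = i ∧ (y:ℕ) = j) := fun hc => h ⟨exi.mpr hc.1, eyj.mpr hc.2⟩
  split_ifs with h1 h2 h3 h4 h5 <;>
    simp only [exi, exj, eyi, eyj] at * <;> omega

lemma card_quad {a b c d : Fin N} (hab : a < b) (hbc : b < c) (hcd : c < d) :
    ({a, b, c, d} : Finset (Fin N)).card = 4 := by
  have h1 : a ∉ ({b, c, d} : Finset (Fin N)) := by
    simp only [Finset.mem_insert, Finset.mem_singleton]
    push_neg
    exact ⟨ne_of_lt hab, ne_of_lt (hab.trans hbc), ne_of_lt ((hab.trans hbc).trans hcd)⟩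
  have h2 : b ∉ ({c, d} : Finset (Fin N)) := by
    simp only [Finset.mem_insert, Finset.mem_singleton]
    push_neg
    exact ⟨ne_of_lt hbc, ne_of_lt (hbc.trans hcd)⟩
  have h3 : c ∉ ({d} : Finset (Fin N)) := by
    simp only [Finset.mem_singleton]; exact ne_of_lt hcd
  rw [Finset.card_insert_of_notMem h1, Finset.card_insert_of_notMem h2,
    Finset.card_insert_of_notMem h3, Finset.card_singleton]

lemma eq_S {f : Fin N → Fin N} {i j : Fin N} (hinv : Function.Involutive f)
    (hfix : ∀ x, f x ≠ x) (hij : (j : ℕ) = (i : ℕ) + 1) (hblock : f i ≠ j)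
    {T : Finset (Fin N)} (hcard : T.card = 4) (hclosed : ∀ x ∈ T, f x ∈ T)
    (hiT : i ∈ T) (hjT : j ∈ T) : T = {i, j, f i, f j} := by
  have hijne : i ≠ j := fun h => by rw [h] at hij; omega
  have hfj : f j ≠ i := fun h => hblock (by rw [← h, hinv])
  have hSsub : ({i, j, f i, f j} : Finset (Fin N)) ⊆ T := by
    simp only [Finset.insert_subset_iff, Finset.singleton_subset_iff]
    exact ⟨hiT, hjT, hclosed i hiT, hclosed j hjT⟩
  have hScard : ({i, j, f i, f j} : Finset (Fin N)).card = 4 := by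
    have h1 : i ∉ ({j, f i, f j} : Finset (Fin N)) := by
      simp only [Finset.mem_insert, Finset.mem_singleton]
      push_neg
      exact ⟨hijne, fun h => hfix i h.symm, fun h => hfj h.symm⟩
    have h2 : j ∉ ({f i, f j} : Finset (Fin N)) := by
      simp only [Finset.mem_insert, Finset.mem_singleton]
      push_neg
      exact ⟨fun h => hblock h.symm, fun h => hfix j h.symm⟩
    have h3 : f i ∉ ({f j} : Finset (Fin N)) := by
      simp only [Finset.mem_singleton]
      exact fun h => hijne (hinv.injective h)
    rw [Finset.card_insert_of_notMem h1, Finset.card_insert_of_notMem h2,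
      Finset.card_insert_of_notMem h3, Finset.card_singleton]
  exact (Finset.eq_of_subset_of_card_le hSsub (by omega)).symm

lemma crossOn_transfer {f : Fin N → Fin N} {i j : Fin N}
    (hinv : Function.Involutive f) (hfix : ∀ x, f x ≠ x)
    (hij : (j : ℕ) = (i : ℕ) + 1) (hblock : f i ≠ j)
    {T : Finset (Fin N)} (hT : T ≠ {i, j, f i, f j}) (h : crossOn N f T) :
    crossOn N (fun x => Equiv.swap i j (f (Equiv.swap i j x))) (T.image (Equiv.swap i j)) := by
  obtain ⟨a, b, c, d, hab, hbc, hcd, hTeq, h1, h2⟩ := h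
  have hfc : f c = a := by rw [← h1, hinv]
  have hfd : f d = b := by rw [← h2, hinv]
  have hclosed : ∀ x ∈ T, f x ∈ T := by
    subst hTeq; intro x hx
    simp only [Finset.mem_insert, Finset.mem_singleton] at hx ⊢
    rcases hx with rfl|rfl|rfl|rfl
    · rw [h1]; tauto
    · rw [h2]; tauto
    · rw [hfc]; tauto
    · rw [hfd]; tauto
  have hnotboth : ¬(i ∈ T ∧ j ∈ T) := fun hc =>
    hT (eq_S hinv hfix hij hblock (by rw [hTeq]; exact card_quad hab hbc hcd) hclosed hc.1 hc.2)
  have key : ∀ x y : Fin N, x ∈ T → y ∈ T → x < y → Equiv.swap i j x < Equiv.swap i j y :=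
    fun x y hx hy hlt => swap_lt hij hlt fun hc => hnotboth ⟨hc.1 ▸ hx, hc.2 ▸ hy⟩
  have ma : a ∈ T := by rw [hTeq]; simp
  have mb : b ∈ T := by rw [hTeq]; simp
  have mc : c ∈ T := by rw [hTeq]; simp
  have md : d ∈ T := by rw [hTeq]; simp
  refine ⟨Equiv.swap i j a, Equiv.swap i j b, Equiv.swap i j c, Equiv.swap i j d,
    key a b ma mb hab, key b c mb mc hbc, key c d mc md hcd, ?_, ?_, ?_⟩
  · rw [hTeq]; simp [Finset.image_insert]
  · simp only [Equiv.swap_apply_self, h1]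
  · simp only [Equiv.swap_apply_self, h2]

lemma nestOn_transfer {f : Fin N → Fin N} {i j : Fin N}
    (hinv : Function.Involutive f) (hfix : ∀ x, f x ≠ x)
    (hij : (j : ℕ) = (i : ℕ) + 1) (hblock : f i ≠ j)
    {T : Finset (Fin N)} (hT : T ≠ {i, j, f i, f j}) (h : nestOn N f T) :
    nestOn N (fun x => Equiv.swap i j (f (Equiv.swap i j x))) (T.image (Equiv.swap i j)) := by
  obtain ⟨a, b, c, d, hab, hbc, hcd, hTeq, h1, h2⟩ := h
  have hfd : f d = a := by rw [← h1, hinv]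
  have hfc : f c = b := by rw [← h2, hinv]
  have hclosed : ∀ x ∈ T, f x ∈ T := by
    subst hTeq; intro x hx
    simp only [Finset.mem_insert, Finset.mem_singleton] at hx ⊢
    rcases hx with rfl|rfl|rfl|rfl
    · rw [h1]; tauto
    · rw [h2]; tauto
    · rw [hfc]; tauto
    · rw [hfd]; tauto
  have hnotboth : ¬(i ∈ T ∧ j ∈ T) := fun hc =>
    hT (eq_S hinv hfix hij hblock (by rw [hTeq]; exact card_quad hab hbc hcd) hclosed hc.1 hc.2)
  have key : ∀ x y : Fin N, x ∈ T → y ∈ T → x < y → Equiv.swap i j x < Equiv.swap i j y :=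
    fun x y hx hy hlt => swap_lt hij hlt fun hc => hnotboth ⟨hc.1 ▸ hx, hc.2 ▸ hy⟩
  have ma : a ∈ T := by rw [hTeq]; simp
  have mb : b ∈ T := by rw [hTeq]; simp
  have mc : c ∈ T := by rw [hTeq]; simp
  have md : d ∈ T := by rw [hTeq]; simp
  refine ⟨Equiv.swap i j a, Equiv.swap i j b, Equiv.swap i j c, Equiv.swap i j d,
    key a b ma mb hab, key b c mb mc hbc, key c d mc md hcd, ?_, ?_, ?_⟩
  · rw [hTeq]; simp [Finset.image_insert]
  · simp only [Equiv.swap_apply_self, h1]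
  · simp only [Equiv.swap_apply_self, h2]

lemma alignOn_transfer {f : Fin N → Fin N} {i j : Fin N}
    (hinv : Function.Involutive f) (hfix : ∀ x, f x ≠ x)
    (hij : (j : ℕ) = (i : ℕ) + 1) (hblock : f i ≠ j)
    {T : Finset (Fin N)} (hT : T ≠ {i, j, f i, f j}) (h : alignOn N f T) :
    alignOn N (fun x => Equiv.swap i j (f (Equiv.swap i j x))) (T.image (Equiv.swap i j)) := by
  obtain ⟨a, b, c, d, hab, hbc, hcd, hTeq, h1, h2⟩ := h
  have hfb : f b = a := by rw [← h1, hinv]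
  have hfd : f d = c := by rw [← h2, hinv]
  have hclosed : ∀ x ∈ T, f x ∈ T := by
    subst hTeq; intro x hx
    simp only [Finset.mem_insert, Finset.mem_singleton] at hx ⊢
    rcases hx with rfl|rfl|rfl|rfl
    · rw [h1]; tauto
    · rw [hfb]; tauto
    · rw [h2]; tauto
    · rw [hfd]; tauto
  have hnotboth : ¬(i ∈ T ∧ j ∈ T) := fun hc =>
    hT (eq_S hinv hfix hij hblock (by rw [hTeq]; exact card_quad hab hbc hcd) hclosed hc.1 hc.2)
  have key : ∀ x y : Fin N, x ∈ T → y ∈ T → x < y → Equiv.swap i j x < Equiv.swap i j y :=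
    fun x y hx hy hlt => swap_lt hij hlt fun hc => hnotboth ⟨hc.1 ▸ hx, hc.2 ▸ hy⟩
  have ma : a ∈ T := by rw [hTeq]; simp
  have mb : b ∈ T := by rw [hTeq]; simp
  have mc : c ∈ T := by rw [hTeq]; simp
  have md : d ∈ T := by rw [hTeq]; simp
  refine ⟨Equiv.swap i j a, Equiv.swap i j b, Equiv.swap i j c, Equiv.swap i j d,
    key a b ma mb hab, key b c mb mc hbc, key c d mc md hcd, ?_, ?_, ?_⟩
  · rw [hTeq]; simp [Finset.image_insert]
  · simp only [Equiv.swap_apply_self, h1]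
  · simp only [Equiv.swap_apply_self, h2]

end Helpers

section Part3

variable {N : ℕ}

def inB (i j : Fin N) (q : Fin N × Fin N × Fin N × Fin N) : Prop :=
  (q.1 = i ∨ q.2.1 = i ∨ q.2.2.1 = i ∨ q.2.2.2 = i) ∧
  (q.1 = j ∨ q.2.1 = j ∨ q.2.2.1 = j ∨ q.2.2.2 = j)

def Bset (i j : Fin N) : Set (Fin N × Fin N × Fin N × Fin N) := {q | inB i j q}

def Phim (i j : Fin N) (q : Fin N × Fin N × Fin N × Fin N) : Fin N × Fin N × Fin N × Fin N :=
  (Equiv.swap i j q.1, Equiv.swap i j q.2.1, Equiv.swap i j q.2.2.1, Equiv.swap i j q.2.2.2)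

lemma Phim_invol (i j : Fin N) (q : Fin N × Fin N × Fin N × Fin N) :
    Phim i j (Phim i j q) = q := by
  obtain ⟨a, b, c, d⟩ := q
  simp [Phim, Equiv.swap_apply_self]

lemma Phim_inj (i j : Fin N) : Function.Injective (Phim i j) :=
  Function.LeftInverse.injective (Phim_invol i j)

lemma inB_Phim (i j : Fin N) (q : Fin N × Fin N × Fin N × Fin N) :
    inB i j (Phim i j q) ↔ inB i j q := by
  obtain ⟨a, b, c, d⟩ := q
  simp only [inB, Phim, Equiv.swap_apply_eq_iff, Equiv.swap_apply_left, Equiv.swap_apply_right]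
  tauto

lemma image_cross {f : Fin N → Fin N} {i j : Fin N} (hij : (j : ℕ) = (i : ℕ) + 1) :
    Phim i j '' (matchCrossings N f \ Bset i j) ⊆
      matchCrossings N (fun x => Equiv.swap i j (f (Equiv.swap i j x))) \ Bset i j := by
  rintro _ ⟨⟨a, b, c, d⟩, ⟨hm, hB⟩, rfl⟩
  obtain ⟨hab, hbc, hcd, h1, h2⟩ := hm
  have hnb : ¬((a = i ∨ b = i ∨ c = i ∨ d = i) ∧ (a = j ∨ b = j ∨ c = j ∨ d = j)) := hB
  constructor
  · refine ⟨swap_lt hij hab ?_, swap_lt hij hbc ?_, swap_lt hij hcd ?_, ?_, ?_⟩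
    · exact fun hc => hnb ⟨Or.inl hc.1, Or.inr (Or.inl hc.2)⟩
    · exact fun hc => hnb ⟨Or.inr (Or.inl hc.1), Or.inr (Or.inr (Or.inl hc.2))⟩
    · exact fun hc => hnb ⟨Or.inr (Or.inr (Or.inl hc.1)), Or.inr (Or.inr (Or.inr hc.2))⟩
    · show Equiv.swap i j (f (Equiv.swap i j (Equiv.swap i j a))) = Equiv.swap i j c
      rw [Equiv.swap_apply_self, h1]
    · show Equiv.swap i j (f (Equiv.swap i j (Equiv.swap i j b))) = Equiv.swap i j d
      rw [Equiv.swap_apply_self, h2]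
  · exact fun hc => hB ((inB_Phim i j _).mp hc)

lemma image_nest {f : Fin N → Fin N} {i j : Fin N} (hij : (j : ℕ) = (i : ℕ) + 1) :
    Phim i j '' (matchNestings N f \ Bset i j) ⊆
      matchNestings N (fun x => Equiv.swap i j (f (Equiv.swap i j x))) \ Bset i j := by
  rintro _ ⟨⟨a, b, c, d⟩, ⟨hm, hB⟩, rfl⟩
  obtain ⟨hab, hbc, hcd, h1, h2⟩ := hm
  have hnb : ¬((a = i ∨ b = i ∨ c = i ∨ d = i) ∧ (a = j ∨ b = j ∨ c = j ∨ d = j)) := hB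
  constructor
  · refine ⟨swap_lt hij hab ?_, swap_lt hij hbc ?_, swap_lt hij hcd ?_, ?_, ?_⟩
    · exact fun hc => hnb ⟨Or.inl hc.1, Or.inr (Or.inl hc.2)⟩
    · exact fun hc => hnb ⟨Or.inr (Or.inl hc.1), Or.inr (Or.inr (Or.inl hc.2))⟩
    · exact fun hc => hnb ⟨Or.inr (Or.inr (Or.inl hc.1)), Or.inr (Or.inr (Or.inr hc.2))⟩
    · show Equiv.swap i j (f (Equiv.swap i j (Equiv.swap i j a))) = Equiv.swap i j d
      rw [Equiv.swap_apply_self, h1]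
    · show Equiv.swap i j (f (Equiv.swap i j (Equiv.swap i j b))) = Equiv.swap i j c
      rw [Equiv.swap_apply_self, h2]
  · exact fun hc => hB ((inB_Phim i j _).mp hc)

lemma image_cross_eq {f : Fin N → Fin N} {i j : Fin N} (hij : (j : ℕ) = (i : ℕ) + 1) :
    Phim i j '' (matchCrossings N f \ Bset i j) =
      matchCrossings N (fun x => Equiv.swap i j (f (Equiv.swap i j x))) \ Bset i j := by
  refine Set.Subset.antisymm (image_cross hij) ?_
  intro q hq
  have h2 := image_cross (N := N) (i := i) (j := j)
    (f := fun x => Equiv.swap i j (f (Equiv.swap i j x))) hij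
  have hfeq : (fun x => Equiv.swap i j
      ((fun y => Equiv.swap i j (f (Equiv.swap i j y))) (Equiv.swap i j x))) = f := by
    funext x; simp [Equiv.swap_apply_self]
  have hq' := h2 ⟨q, hq, rfl⟩
  rw [hfeq] at hq'
  exact ⟨Phim i j q, hq', Phim_invol i j q⟩

lemma image_nest_eq {f : Fin N → Fin N} {i j : Fin N} (hij : (j : ℕ) = (i : ℕ) + 1) :
    Phim i j '' (matchNestings N f \ Bset i j) =
      matchNestings N (fun x => Equiv.swap i j (f (Equiv.swap i j x))) \ Bset i j := by
  refine Set.Subset.antisymm (image_nest hij) ?_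
  intro q hq
  have h2 := image_nest (N := N) (i := i) (j := j)
    (f := fun x => Equiv.swap i j (f (Equiv.swap i j x))) hij
  have hfeq : (fun x => Equiv.swap i j
      ((fun y => Equiv.swap i j (f (Equiv.swap i j y))) (Equiv.swap i j x))) = f := by
    funext x; simp [Equiv.swap_apply_self]
  have hq' := h2 ⟨q, hq, rfl⟩
  rw [hfeq] at hq'
  exact ⟨Phim i j q, hq', Phim_invol i j q⟩

end Part3

section InterB

variable {N : ℕ} {f : Fin N → Fin N} {i j s1 s2 s3 s4 : Fin N}

lemma quad_of_B (hinv : Function.Involutive f) (hfix : ∀ x, f x ≠ x)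
    (hij : (j : ℕ) = (i : ℕ) + 1) (hblock : f i ≠ j)
    (h12 : s1 < s2) (h23 : s2 < s3) (h34 : s3 < s4)
    (hSrep : ({i, j, f i, f j} : Finset (Fin N)) = {s1, s2, s3, s4})
    {a b c d : Fin N} (hab : a < b) (hbc : b < c) (hcd : c < d)
    (hclosed : ∀ x ∈ ({a, b, c, d} : Finset (Fin N)), f x ∈ ({a, b, c, d} : Finset (Fin N)))
    (hB : inB i j (a, b, c, d)) :
    a = s1 ∧ b = s2 ∧ c = s3 ∧ d = s4 := by
  have hiT : i ∈ ({a, b, c, d} : Finset (Fin N)) := by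
    rcases hB.1 with h | h | h | h <;> simp [← h]
  have hjT : j ∈ ({a, b, c, d} : Finset (Fin N)) := by
    rcases hB.2 with h | h | h | h <;> simp [← h]
  have hT := eq_S hinv hfix hij hblock (card_quad hab hbc hcd) hclosed hiT hjT
  exact quadEq hab hbc hcd h12 h23 h34 (hT.trans hSrep)

lemma closed_cross {a b c d : Fin N} (hinv : Function.Involutive f)
    (h1 : f a = c) (h2 : f b = d) :
    ∀ x ∈ ({a, b, c, d} : Finset (Fin N)), f x ∈ ({a, b, c, d} : Finset (Fin N)) := by
  have hfc : f c = a := by rw [← h1, hinv]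
  have hfd : f d = b := by rw [← h2, hinv]
  intro x hx
  simp only [Finset.mem_insert, Finset.mem_singleton] at hx ⊢
  rcases hx with rfl | rfl | rfl | rfl
  · rw [h1]; tauto
  · rw [h2]; tauto
  · rw [hfc]; tauto
  · rw [hfd]; tauto

lemma closed_nest {a b c d : Fin N} (hinv : Function.Involutive f)
    (h1 : f a = d) (h2 : f b = c) :
    ∀ x ∈ ({a, b, c, d} : Finset (Fin N)), f x ∈ ({a, b, c, d} : Finset (Fin N)) := by
  have hfd : f d = a := by rw [← h1, hinv]
  have hfc : f c = b := by rw [← h2, hinv]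
  intro x hx
  simp only [Finset.mem_insert, Finset.mem_singleton] at hx ⊢
  rcases hx with rfl | rfl | rfl | rfl
  · rw [h1]; tauto
  · rw [h2]; tauto
  · rw [hfc]; tauto
  · rw [hfd]; tauto

lemma mem_B_quad (hSrep : ({i, j, f i, f j} : Finset (Fin N)) = {s1, s2, s3, s4}) :
    inB i j (s1, s2, s3, s4) := by
  have hi : i ∈ ({s1, s2, s3, s4} : Finset (Fin N)) := by rw [← hSrep]; simp
  have hj : j ∈ ({s1, s2, s3, s4} : Finset (Fin N)) := by rw [← hSrep]; simp
  simp only [Finset.mem_insert, Finset.mem_singleton] at hi hj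
  constructor
  · rcases hi with h | h | h | h <;> simp [h]
  · rcases hj with h | h | h | h <;> simp [h]

lemma interB_cross_singleton (hinv : Function.Involutive f) (hfix : ∀ x, f x ≠ x)
    (hij : (j : ℕ) = (i : ℕ) + 1) (hblock : f i ≠ j)
    (h12 : s1 < s2) (h23 : s2 < s3) (h34 : s3 < s4)
    (hSrep : ({i, j, f i, f j} : Finset (Fin N)) = {s1, s2, s3, s4})
    (hp1 : f s1 = s3) (hp2 : f s2 = s4) :
    matchCrossings N f ∩ Bset i j = {(s1, s2, s3, s4)} := by
  ext ⟨a, b, c, d⟩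
  simp only [Set.mem_inter_iff, Set.mem_singleton_iff, matchCrossings, Set.mem_setOf_eq,
    Bset, Prod.mk.injEq]
  constructor
  · rintro ⟨⟨hab, hbc, hcd, h1, h2⟩, hB⟩
    exact quad_of_B hinv hfix hij hblock h12 h23 h34 hSrep hab hbc hcd
      (closed_cross hinv h1 h2) hB
  · rintro ⟨rfl, rfl, rfl, rfl⟩
    exact ⟨⟨h12, h23, h34, hp1, hp2⟩, mem_B_quad hSrep⟩

lemma interB_cross_empty (hinv : Function.Involutive f) (hfix : ∀ x, f x ≠ x)
    (hij : (j : ℕ) = (i : ℕ) + 1) (hblock : f i ≠ j)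
    (h12 : s1 < s2) (h23 : s2 < s3) (h34 : s3 < s4)
    (hSrep : ({i, j, f i, f j} : Finset (Fin N)) = {s1, s2, s3, s4})
    (hne : f s1 ≠ s3 ∨ f s2 ≠ s4) :
    matchCrossings N f ∩ Bset i j = ∅ := by
  ext ⟨a, b, c, d⟩
  simp only [Set.mem_inter_iff, Set.mem_empty_iff_false, iff_false, not_and,
    matchCrossings, Set.mem_setOf_eq, Bset]
  rintro ⟨hab, hbc, hcd, h1, h2⟩ hB
  obtain ⟨e1, e2, e3, e4⟩ := quad_of_B hinv hfix hij hblock h12 h23 h34 hSrep hab hbc hcd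
    (closed_cross hinv h1 h2) hB
  subst e1; subst e2; subst e3; subst e4
  rcases hne with h | h <;> [exact h h1; exact h h2]

lemma interB_nest_singleton (hinv : Function.Involutive f) (hfix : ∀ x, f x ≠ x)
    (hij : (j : ℕ) = (i : ℕ) + 1) (hblock : f i ≠ j)
    (h12 : s1 < s2) (h23 : s2 < s3) (h34 : s3 < s4)
    (hSrep : ({i, j, f i, f j} : Finset (Fin N)) = {s1, s2, s3, s4})
    (hp1 : f s1 = s4) (hp2 : f s2 = s3) :
    matchNestings N f ∩ Bset i j = {(s1, s2, s3, s4)} := by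
  ext ⟨a, b, c, d⟩
  simp only [Set.mem_inter_iff, Set.mem_singleton_iff, matchNestings, Set.mem_setOf_eq,
    Bset, Prod.mk.injEq]
  constructor
  · rintro ⟨⟨hab, hbc, hcd, h1, h2⟩, hB⟩
    exact quad_of_B hinv hfix hij hblock h12 h23 h34 hSrep hab hbc hcd
      (closed_nest hinv h1 h2) hB
  · rintro ⟨rfl, rfl, rfl, rfl⟩
    exact ⟨⟨h12, h23, h34, hp1, hp2⟩, mem_B_quad hSrep⟩

lemma interB_nest_empty (hinv : Function.Involutive f) (hfix : ∀ x, f x ≠ x)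
    (hij : (j : ℕ) = (i : ℕ) + 1) (hblock : f i ≠ j)
    (h12 : s1 < s2) (h23 : s2 < s3) (h34 : s3 < s4)
    (hSrep : ({i, j, f i, f j} : Finset (Fin N)) = {s1, s2, s3, s4})
    (hne : f s1 ≠ s4 ∨ f s2 ≠ s3) :
    matchNestings N f ∩ Bset i j = ∅ := by
  ext ⟨a, b, c, d⟩
  simp only [Set.mem_inter_iff, Set.mem_empty_iff_false, iff_false, not_and,
    matchNestings, Set.mem_setOf_eq, Bset]
  rintro ⟨hab, hbc, hcd, h1, h2⟩ hB
  obtain ⟨e1, e2, e3, e4⟩ := quad_of_B hinv hfix hij hblock h12 h23 h34 hSrep hab hbc hcd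
    (closed_nest hinv h1 h2) hB
  subst e1; subst e2; subst e3; subst e4
  rcases hne with h | h <;> [exact h h1; exact h h2]

lemma not_crossOn {S' : Finset (Fin N)} (h12 : s1 < s2) (h23 : s2 < s3) (h34 : s3 < s4)
    (hSrep : S' = {s1, s2, s3, s4}) (hne : f s1 ≠ s3 ∨ f s2 ≠ s4) : ¬ crossOn N f S' := by
  rintro ⟨a, b, c, d, hab, hbc, hcd, hTeq, h1, h2⟩
  obtain ⟨e1, e2, e3, e4⟩ := quadEq hab hbc hcd h12 h23 h34 (hTeq.symm.trans hSrep)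
  subst e1; subst e2; subst e3; subst e4
  rcases hne with h | h <;> [exact h h1; exact h h2]

lemma not_nestOn {S' : Finset (Fin N)} (h12 : s1 < s2) (h23 : s2 < s3) (h34 : s3 < s4)
    (hSrep : S' = {s1, s2, s3, s4}) (hne : f s1 ≠ s4 ∨ f s2 ≠ s3) : ¬ nestOn N f S' := by
  rintro ⟨a, b, c, d, hab, hbc, hcd, hTeq, h1, h2⟩
  obtain ⟨e1, e2, e3, e4⟩ := quadEq hab hbc hcd h12 h23 h34 (hTeq.symm.trans hSrep)
  subst e1; subst e2; subst e3; subst e4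
  rcases hne with h | h <;> [exact h h1; exact h h2]

lemma not_alignOn {S' : Finset (Fin N)} (h12 : s1 < s2) (h23 : s2 < s3) (h34 : s3 < s4)
    (hSrep : S' = {s1, s2, s3, s4}) (hne : f s1 ≠ s2 ∨ f s3 ≠ s4) : ¬ alignOn N f S' := by
  rintro ⟨a, b, c, d, hab, hbc, hcd, hTeq, h1, h2⟩
  obtain ⟨e1, e2, e3, e4⟩ := quadEq hab hbc hcd h12 h23 h34 (hTeq.symm.trans hSrep)
  subst e1; subst e2; subst e3; subst e4
  rcases hne with h | h <;> [exact h h1; exact h h2]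

end InterB

section Lambda

lemma ncard_split {α : Type*} [Finite α] (s B : Set α) :
    s.ncard = (s \ B).ncard + (s ∩ B).ncard := by
  nth_rewrite 1 [← Set.diff_union_inter s B]
  rw [Set.ncard_union_eq Set.disjoint_sdiff_inter]

lemma lambda_eq {N : ℕ} (f : Fin N → Fin N) (i j : Fin N) (hij : (j : ℕ) = (i : ℕ) + 1) :
    (matchCrossings N (fun x => Equiv.swap i j (f (Equiv.swap i j x)))).ncard
      + 2 * (matchNestings N (fun x => Equiv.swap i j (f (Equiv.swap i j x)))).ncard
      + ((matchCrossings N f ∩ Bset i j).ncard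
        + 2 * (matchNestings N f ∩ Bset i j).ncard)
    = (matchCrossings N f).ncard + 2 * (matchNestings N f).ncard
      + ((matchCrossings N (fun x => Equiv.swap i j (f (Equiv.swap i j x))) ∩ Bset i j).ncard
        + 2 * (matchNestings N (fun x => Equiv.swap i j (f (Equiv.swap i j x))) ∩ Bset i j).ncard) := by
  set g := fun x => Equiv.swap i j (f (Equiv.swap i j x)) with hg
  have hc : (matchCrossings N g \ Bset i j).ncard = (matchCrossings N f \ Bset i j).ncard := by
    rw [← image_cross_eq hij, Set.ncard_image_of_injective _ (Phim_inj i j)]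
  have hn : (matchNestings N g \ Bset i j).ncard = (matchNestings N f \ Bset i j).ncard := by
    rw [← image_nest_eq hij, Set.ncard_image_of_injective _ (Phim_inj i j)]
  rw [ncard_split (matchCrossings N g) (Bset i j), ncard_split (matchNestings N g) (Bset i j),
    ncard_split (matchCrossings N f) (Bset i j), ncard_split (matchNestings N f) (Bset i j),
    hc, hn]
  ring

end Lambda

set_option maxHeartbeats 2000000 in
/-- Applying the adjacent transposition `(i, i+1)` to a perfect matching `m` not
containing the block `{i, i+1}` changes the crossing/nesting/alignment type of exactly
one pair of blocks (the pair containing `i` and `i+1`), leaves the type of every other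
pair of blocks unchanged, and changes `λ(m) = C(m) + 2N(m)` by exactly 1. -/

theorem stmt19 (k : ℕ) (f : Fin (2 * k) → Fin (2 * k))
    (hinv : Function.Involutive f) (hfix : ∀ i, f i ≠ i)
    (i j : Fin (2 * k)) (hij : (j : ℕ) = (i : ℕ) + 1) (hblock : f i ≠ j)
    (σ : Fin (2 * k) → Fin (2 * k)) (hσ : σ = fun x => Equiv.swap i j x)
    (g : Fin (2 * k) → Fin (2 * k)) (hg : g = σ ∘ f ∘ σ)
    (S : Finset (Fin (2 * k))) (hS : S = {i, j, f i, f j}) :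
    (∀ T : Finset (Fin (2 * k)), T ≠ S →
      ((crossOn (2 * k) f T ↔ crossOn (2 * k) g (T.image σ)) ∧
       (nestOn (2 * k) f T ↔ nestOn (2 * k) g (T.image σ)) ∧
       (alignOn (2 * k) f T ↔ alignOn (2 * k) g (T.image σ)))) ∧
    ¬((crossOn (2 * k) f S ↔ crossOn (2 * k) g S) ∧
      (nestOn (2 * k) f S ↔ nestOn (2 * k) g S) ∧
      (alignOn (2 * k) f S ↔ alignOn (2 * k) g S)) ∧
    ((matchCrossings (2 * k) g).ncard + 2 * (matchNestings (2 * k) g).ncard =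
        (matchCrossings (2 * k) f).ncard + 2 * (matchNestings (2 * k) f).ncard + 1 ∨
      (matchCrossings (2 * k) f).ncard + 2 * (matchNestings (2 * k) f).ncard =
        (matchCrossings (2 * k) g).ncard + 2 * (matchNestings (2 * k) g).ncard + 1) := by
  subst hσ hS
  have hg' : g = fun x => Equiv.swap i j (f (Equiv.swap i j x)) := hg
  have hgapp : ∀ x, g x = Equiv.swap i j (f (Equiv.swap i j x)) := fun x => by rw [hg']
  have hijne : i ≠ j := fun h => by rw [h] at hij; omega
  have hfj_ne_i : f j ≠ i := fun h => hblock (by rw [← h, hinv])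
  have hσp : Equiv.swap i j (f i) = f i :=
    Equiv.swap_apply_of_ne_of_ne (hfix i) hblock
  have hσq : Equiv.swap i j (f j) = f j :=
    Equiv.swap_apply_of_ne_of_ne hfj_ne_i (hfix j)
  have hgi : g i = f j := by rw [hgapp, Equiv.swap_apply_left, hσq]
  have hgj : g j = f i := by rw [hgapp, Equiv.swap_apply_right, hσp]
  have hgp : g (f i) = j := by rw [hgapp, hσp, hinv, Equiv.swap_apply_left]
  have hgq : g (f j) = i := by rw [hgapp, hσq, hinv, Equiv.swap_apply_right]
  have hfp : f (f i) = i := hinv i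
  have hfq : f (f j) = j := hinv j
  have hinvg : Function.Involutive g := by
    intro x
    rw [hgapp, hgapp, Equiv.swap_apply_self, hinv, Equiv.swap_apply_self]
  have hfixg : ∀ x, g x ≠ x := by
    intro x h
    rw [hgapp] at h
    apply hfix (Equiv.swap i j x)
    have h2 := congrArg (Equiv.swap i j) h
    rwa [Equiv.swap_apply_self] at h2
  have hblockg : g i ≠ j := by rw [hgi]; exact hfix j
  have hpqne : f i ≠ f j := fun h => hijne (hinv.injective h)
  -- part 1
  have part1 : ∀ T : Finset (Fin (2 * k)), T ≠ {i, j, f i, f j} →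
      ((crossOn (2 * k) f T ↔ crossOn (2 * k) g (T.image fun x => Equiv.swap i j x)) ∧
       (nestOn (2 * k) f T ↔ nestOn (2 * k) g (T.image fun x => Equiv.swap i j x)) ∧
       (alignOn (2 * k) f T ↔ alignOn (2 * k) g (T.image fun x => Equiv.swap i j x))) := by
    have himg_inv : ∀ T : Finset (Fin (2 * k)),
        ((T.image fun x => Equiv.swap i j x).image fun x => Equiv.swap i j x) = T := by
      intro T
      rw [Finset.image_image]
      have : ((fun x => Equiv.swap i j x) ∘ fun x => Equiv.swap i j x) = id := by
        funext x; simp [Equiv.swap_apply_self]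
      rw [this, Finset.image_id]
    have hTimg_ne : ∀ T : Finset (Fin (2 * k)), T ≠ {i, j, f i, f j} →
        (T.image fun x => Equiv.swap i j x) ≠ {i, j, g i, g j} := by
      intro T hT h
      apply hT
      have hSimg : (({i, j, f i, f j} : Finset (Fin (2 * k))).image
          fun x => Equiv.swap i j x) = {i, j, g i, g j} := by
        rw [hgi, hgj]
        rw [show ({i, j, f i, f j} : Finset (Fin (2 * k)))
            = insert i (insert j (insert (f i) {f j})) from rfl]
        rw [Finset.image_insert, Finset.image_insert, Finset.image_insert,
          Finset.image_singleton]
        rw [Equiv.swap_apply_left, Equiv.swap_apply_right, hσp, hσq]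
        ext x
        simp only [Finset.mem_insert, Finset.mem_singleton]
        tauto
      have := h.trans hSimg.symm
      exact Finset.image_injective (Equiv.injective _) this
    have hfeq : (fun x => Equiv.swap i j (g (Equiv.swap i j x))) = f := by
      funext x
      rw [hgapp, Equiv.swap_apply_self, Equiv.swap_apply_self]
    intro T hT
    refine ⟨⟨fun h => ?_, fun h => ?_⟩, ⟨fun h => ?_, fun h => ?_⟩, ⟨fun h => ?_, fun h => ?_⟩⟩
    · rw [hg']; exact crossOn_transfer hinv hfix hij hblock hT h
    · have h2 := crossOn_transfer hinvg hfixg hij hblockg (hTimg_ne T hT) h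
      rw [himg_inv T, hfeq] at h2
      exact h2
    · rw [hg']; exact nestOn_transfer hinv hfix hij hblock hT h
    · have h2 := nestOn_transfer hinvg hfixg hij hblockg (hTimg_ne T hT) h
      rw [himg_inv T, hfeq] at h2
      exact h2
    · rw [hg']; exact alignOn_transfer hinv hfix hij hblock hT h
    · have h2 := alignOn_transfer hinvg hfixg hij hblockg (hTimg_ne T hT) h
      rw [himg_inv T, hfeq] at h2
      exact h2
  refine ⟨part1, ?_⟩
  -- value facts
  have hpI : (f i : ℕ) ≠ (i : ℕ) := fun h => hfix i (Fin.val_injective h)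
  have hpJ : (f i : ℕ) ≠ (j : ℕ) := fun h => hblock (Fin.val_injective h)
  have hqI : (f j : ℕ) ≠ (i : ℕ) := fun h => hfj_ne_i (Fin.val_injective h)
  have hqJ : (f j : ℕ) ≠ (j : ℕ) := fun h => hfix j (Fin.val_injective h)
  have hpqv : (f i : ℕ) ≠ (f j : ℕ) := fun h => hpqne (Fin.val_injective h)
  have L := lambda_eq f i j hij
  rw [← hg'] at L
  rcases (show (f i : ℕ) < (i : ℕ) ∨ (j : ℕ) < (f i : ℕ) by omega) with hp | hp <;>
    rcases (show (f j : ℕ) < (i : ℕ) ∨ (j : ℕ) < (f j : ℕ) by omega) with hq | hq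
  · -- both below i
    rcases (show (f i : ℕ) < (f j : ℕ) ∨ (f j : ℕ) < (f i : ℕ) by omega) with hpq | hpq
    · -- case A1 : f i < f j < i < j, f crossing, g nesting
      have h12 : f i < f j := Fin.lt_def.mpr (by omega)
      have h23 : f j < i := Fin.lt_def.mpr (by omega)
      have h34 : i < j := Fin.lt_def.mpr (by omega)
      have hSrep : ({i, j, f i, f j} : Finset (Fin (2 * k))) = {f i, f j, i, j} := by
        ext x; simp only [Finset.mem_insert, Finset.mem_singleton]; tauto
      have hSrepg : ({i, j, g i, g j} : Finset (Fin (2 * k))) = {f i, f j, i, j} := by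
        rw [hgi, hgj]; ext x; simp only [Finset.mem_insert, Finset.mem_singleton]; tauto
      have eFC := interB_cross_singleton hinv hfix hij hblock h12 h23 h34 hSrep hfp hfq
      have eFN := interB_nest_empty hinv hfix hij hblock h12 h23 h34 hSrep
        (Or.inl (by rw [hfp]; exact hijne))
      have eGC := interB_cross_empty hinvg hfixg hij hblockg h12 h23 h34 hSrepg
        (Or.inl (by rw [hgp]; exact Ne.symm hijne))
      have eGN := interB_nest_singleton hinvg hfixg hij hblockg h12 h23 h34 hSrepg hgp hgq
      constructor
      · rintro ⟨hcIff, -, -⟩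
        have hcf : crossOn (2 * k) f {i, j, f i, f j} :=
          ⟨f i, f j, i, j, h12, h23, h34, hSrep, hfp, hfq⟩
        exact not_crossOn h12 h23 h34 hSrep
          (Or.inl (by rw [hgp]; exact Ne.symm hijne)) (hcIff.mp hcf)
      · rw [eFC, eFN, eGC, eGN, Set.ncard_singleton, Set.ncard_empty] at L
        omega
    · -- case A2 : f j < f i < i < j, f nesting, g crossing
      have h12 : f j < f i := Fin.lt_def.mpr (by omega)
      have h23 : f i < i := Fin.lt_def.mpr (by omega)
      have h34 : i < j := Fin.lt_def.mpr (by omega)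
      have hSrep : ({i, j, f i, f j} : Finset (Fin (2 * k))) = {f j, f i, i, j} := by
        ext x; simp only [Finset.mem_insert, Finset.mem_singleton]; tauto
      have hSrepg : ({i, j, g i, g j} : Finset (Fin (2 * k))) = {f j, f i, i, j} := by
        rw [hgi, hgj]; ext x; simp only [Finset.mem_insert, Finset.mem_singleton]; tauto
      have eFC := interB_cross_empty hinv hfix hij hblock h12 h23 h34 hSrep
        (Or.inl (by rw [hfq]; exact Ne.symm hijne))
      have eFN := interB_nest_singleton hinv hfix hij hblock h12 h23 h34 hSrep hfq hfp
      have eGC := interB_cross_singleton hinvg hfixg hij hblockg h12 h23 h34 hSrepg hgq hgp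
      have eGN := interB_nest_empty hinvg hfixg hij hblockg h12 h23 h34 hSrepg
        (Or.inl (by rw [hgq]; exact hijne))
      constructor
      · rintro ⟨-, hnIff, -⟩
        have hnf : nestOn (2 * k) f {i, j, f i, f j} :=
          ⟨f j, f i, i, j, h12, h23, h34, hSrep, hfq, hfp⟩
        exact not_nestOn h12 h23 h34 hSrep
          (Or.inl (by rw [hgq]; exact hijne)) (hnIff.mp hnf)
      · rw [eFC, eFN, eGC, eGN, Set.ncard_singleton, Set.ncard_empty] at L
        omega
  · -- case B : f i < i < j < f j, f alignment, g crossing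
    have h12 : f i < i := Fin.lt_def.mpr (by omega)
    have h23 : i < j := Fin.lt_def.mpr (by omega)
    have h34 : j < f j := Fin.lt_def.mpr (by omega)
    have hSrep : ({i, j, f i, f j} : Finset (Fin (2 * k))) = {f i, i, j, f j} := by
      ext x; simp only [Finset.mem_insert, Finset.mem_singleton]; tauto
    have hSrepg : ({i, j, g i, g j} : Finset (Fin (2 * k))) = {f i, i, j, f j} := by
      rw [hgi, hgj]; ext x; simp only [Finset.mem_insert, Finset.mem_singleton]; tauto
    have eFC := interB_cross_empty hinv hfix hij hblock h12 h23 h34 hSrep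
      (Or.inl (by rw [hfp]; exact hijne))
    have eFN := interB_nest_empty hinv hfix hij hblock h12 h23 h34 hSrep
      (Or.inl (by rw [hfp]; exact Ne.symm hfj_ne_i))
    have eGC := interB_cross_singleton hinvg hfixg hij hblockg h12 h23 h34 hSrepg hgp hgi
    have eGN := interB_nest_empty hinvg hfixg hij hblockg h12 h23 h34 hSrepg
      (Or.inl (by rw [hgp]; exact fun h => hfix j (h.symm)))
    constructor
    · rintro ⟨-, -, haIff⟩
      have haf : alignOn (2 * k) f {i, j, f i, f j} :=
        ⟨f i, i, j, f j, h12, h23, h34, hSrep, hfp, rfl⟩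
      exact not_alignOn h12 h23 h34 hSrep
        (Or.inl (by rw [hgp]; exact Ne.symm hijne)) (haIff.mp haf)
    · rw [eFC, eFN, eGC, eGN, Set.ncard_singleton, Set.ncard_empty] at L
      omega
  · -- case C : f j < i < j < f i, f crossing, g alignment
    have h12 : f j < i := Fin.lt_def.mpr (by omega)
    have h23 : i < j := Fin.lt_def.mpr (by omega)
    have h34 : j < f i := Fin.lt_def.mpr (by omega)
    have hSrep : ({i, j, f i, f j} : Finset (Fin (2 * k))) = {f j, i, j, f i} := by
      ext x; simp only [Finset.mem_insert, Finset.mem_singleton]; tauto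
    have hSrepg : ({i, j, g i, g j} : Finset (Fin (2 * k))) = {f j, i, j, f i} := by
      rw [hgi, hgj]; ext x; simp only [Finset.mem_insert, Finset.mem_singleton]; tauto
    have eFC := interB_cross_singleton hinv hfix hij hblock h12 h23 h34 hSrep hfq rfl
    have eFN := interB_nest_empty hinv hfix hij hblock h12 h23 h34 hSrep
      (Or.inl (by rw [hfq]; exact fun h => hblock h.symm))
    have eGC := interB_cross_empty hinvg hfixg hij hblockg h12 h23 h34 hSrepg
      (Or.inl (by rw [hgq]; exact hijne))
    have eGN := interB_nest_empty hinvg hfixg hij hblockg h12 h23 h34 hSrepg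
      (Or.inl (by rw [hgq]; exact fun h => hfix i h.symm))
    constructor
    · rintro ⟨hcIff, -, -⟩
      have hcf : crossOn (2 * k) f {i, j, f i, f j} :=
        ⟨f j, i, j, f i, h12, h23, h34, hSrep, hfq, rfl⟩
      exact not_crossOn h12 h23 h34 hSrep
        (Or.inl (by rw [hgq]; exact hijne)) (hcIff.mp hcf)
    · rw [eFC, eFN, eGC, eGN, Set.ncard_singleton, Set.ncard_empty] at L
      omega
  · -- both above j
    rcases (show (f i : ℕ) < (f j : ℕ) ∨ (f j : ℕ) < (f i : ℕ) by omega) with hpq | hpq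
    · -- case D1 : i < j < f i < f j, f crossing, g nesting
      have h12 : i < j := Fin.lt_def.mpr (by omega)
      have h23 : j < f i := Fin.lt_def.mpr (by omega)
      have h34 : f i < f j := Fin.lt_def.mpr (by omega)
      have hSrep : ({i, j, f i, f j} : Finset (Fin (2 * k))) = {i, j, f i, f j} := rfl
      have hSrepg : ({i, j, g i, g j} : Finset (Fin (2 * k))) = {i, j, f i, f j} := by
        rw [hgi, hgj]; ext x; simp only [Finset.mem_insert, Finset.mem_singleton]; tauto
      have eFC := interB_cross_singleton hinv hfix hij hblock h12 h23 h34 hSrep rfl rfl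
      have eFN := interB_nest_empty hinv hfix hij hblock h12 h23 h34 hSrep
        (Or.inl hpqne)
      have eGC := interB_cross_empty hinvg hfixg hij hblockg h12 h23 h34 hSrepg
        (Or.inl (by rw [hgi]; exact Ne.symm hpqne))
      have eGN := interB_nest_singleton hinvg hfixg hij hblockg h12 h23 h34 hSrepg hgi hgj
      constructor
      · rintro ⟨hcIff, -, -⟩
        have hcf : crossOn (2 * k) f {i, j, f i, f j} :=
          ⟨i, j, f i, f j, h12, h23, h34, hSrep, rfl, rfl⟩
        exact not_crossOn h12 h23 h34 hSrep
          (Or.inl (by rw [hgi]; exact Ne.symm hpqne)) (hcIff.mp hcf)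
      · rw [eFC, eFN, eGC, eGN, Set.ncard_singleton, Set.ncard_empty] at L
        omega
    · -- case D2 : i < j < f j < f i, f nesting, g crossing
      have h12 : i < j := Fin.lt_def.mpr (by omega)
      have h23 : j < f j := Fin.lt_def.mpr (by omega)
      have h34 : f j < f i := Fin.lt_def.mpr (by omega)
      have hSrep : ({i, j, f i, f j} : Finset (Fin (2 * k))) = {i, j, f j, f i} := by
        ext x; simp only [Finset.mem_insert, Finset.mem_singleton]; tauto
      have hSrepg : ({i, j, g i, g j} : Finset (Fin (2 * k))) = {i, j, f j, f i} := by
        rw [hgi, hgj]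
      have eFC := interB_cross_empty hinv hfix hij hblock h12 h23 h34 hSrep
        (Or.inl hpqne)
      have eFN := interB_nest_singleton hinv hfix hij hblock h12 h23 h34 hSrep rfl rfl
      have eGC := interB_cross_singleton hinvg hfixg hij hblockg h12 h23 h34 hSrepg hgi hgj
      have eGN := interB_nest_empty hinvg hfixg hij hblockg h12 h23 h34 hSrepg
        (Or.inl (by rw [hgi]; exact Ne.symm hpqne))
      constructor
      · rintro ⟨-, hnIff, -⟩
        have hnf : nestOn (2 * k) f {i, j, f i, f j} :=
          ⟨i, j, f j, f i, h12, h23, h34, hSrep, rfl, rfl⟩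
        exact not_nestOn h12 h23 h34 hSrep
          (Or.inl (by rw [hgi]; exact Ne.symm hpqne)) (hnIff.mp hnf)
      · rw [eFC, eFN, eGC, eGN, Set.ncard_singleton, Set.ncard_empty] at L
        omega
end
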